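/- arXiv:2506.01855 — 5 statements merged into one kernel-verified Lean document; each statement's English description precedes it below -/
import Mathlib

section
/- Let P and Q be two probability distributions on a finite set M with total variation distance at most δ ∈ (0,1). Then the absolute difference of their Shannon entropies satisfies |H(P) − H(Q)| ≤ 2δ·log(|M|/δ). -/
open scoped BigOperators

/-- Shannon entropy of a pmf on a finite set (natural log). -/
noncomputable def shannonEntropy {M : Type*} [Fintype M] (p : M → ℝ) : ℝ :=
  -∑ y, p y * Real.log (p y)

/-- Total variation distance between two pmfs on a finite set. -/
noncomputable def tvDist {M : Type*} [Fintype M] (p q : M → ℝ) : ℝ :=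
  (∑ y, |p y - q y|) / 2

/-- `p` is a probability mass function. -/
def IsPMF {M : Type*} [Fintype M] (p : M → ℝ) : Prop :=
  (∀ y, 0 ≤ p y) ∧ ∑ y, p y = 1

/-!
Write `η = negMulLog` and `m = |M|`. On `[0, 1]`, `|η x - η y| ≤ η |x - y| + |x - y| log 2`,
and Jensen's inequality for the concave `η` bounds `∑ η (εᵢ)` by `s log (m / s)` where
`s = ∑ εᵢ`. With `εᵢ = |pᵢ - qᵢ|`, `s = 2t` for `t` the total variation distance, this gives
`|H(P) - H(Q)| ≤ 2t log (m / t)`, and `t ↦ t log (m / t)` is increasing as long as `e t ≤ m`.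
If instead `m < e δ`, then `m ≤ 2` and the trivial bound `|H(P) - H(Q)| ≤ log m` suffices.
-/

open Real Finset

namespace Real

lemma negMulLog_le_tangent_line {x c : ℝ} (hx : 0 ≤ x) (hc : 0 < c) :
    negMulLog x ≤ negMulLog c + (-log c - 1) * (x - c) := by
  rcases hx.eq_or_lt with rfl | hx
  · simp only [negMulLog]
    nlinarith
  have hlog := mul_le_mul_of_nonneg_left (log_le_sub_one_of_pos (div_pos hc hx)) hx.le
  rw [log_div hc.ne' hx.ne', mul_sub, mul_sub, mul_div_cancel₀ _ hx.ne'] at hlog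
  simp only [negMulLog]
  nlinarith

lemma negMulLog_le_exp_neg_one {x : ℝ} (hx : 0 ≤ x) : negMulLog x ≤ exp (-1) := by
  simpa [negMulLog, log_exp] using negMulLog_le_tangent_line hx (exp_pos (-1))

lemma negMulLog_add_le {a b : ℝ} (ha : 0 ≤ a) (hb : 0 ≤ b) :
    negMulLog (a + b) ≤ negMulLog a + negMulLog b := by
  rcases ha.eq_or_lt with rfl | ha
  · simp
  rcases hb.eq_or_lt with rfl | hb
  · simp
  have hla := mul_le_mul_of_nonneg_left (log_le_log ha (le_add_of_nonneg_right hb.le)) ha.le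
  have hlb := mul_le_mul_of_nonneg_left (log_le_log hb (le_add_of_nonneg_left ha.le)) hb.le
  simp only [negMulLog]
  linarith

lemma negMulLog_sub_negMulLog_add_le_self {x ε : ℝ} (hx : 0 ≤ x) (hε : 0 ≤ ε) (h1 : x + ε ≤ 1) :
    negMulLog x - negMulLog (x + ε) ≤ ε := by
  rcases (add_nonneg hx hε).eq_or_lt with h0 | hpos
  · obtain ⟨rfl, rfl⟩ : x = 0 ∧ ε = 0 := ⟨by linarith, by linarith⟩
    simp
  have htangent := negMulLog_le_tangent_line hx hpos
  have hlog := mul_nonpos_of_nonneg_of_nonpos hε (log_nonpos hpos.le h1)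
  nlinarith

lemma negMulLog_sub_negMulLog_add_le {x ε : ℝ} (hx : 0 ≤ x) (hε : 0 ≤ ε) (h1 : x + ε ≤ 1) :
    negMulLog x - negMulLog (x + ε) ≤ negMulLog ε + ε * log 2 := by
  -- Below `2 / e` the cruder bound `ε` suffices; above it, `negMulLog x ≤ 1 / e ≤ ε * log 2`.
  rcases le_or_gt ε (2 * exp (-1)) with hsmall | hlarge
  · suffices ε ≤ negMulLog ε + ε * log 2 by
      linarith [negMulLog_sub_negMulLog_add_le_self hx hε h1]
    rcases hε.eq_or_lt with rfl | hε
    · simp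
    have hlog : log ε ≤ log 2 - 1 := by
      linarith [log_le_log hε hsmall, log_mul two_ne_zero (exp_pos (-1)).ne', log_exp (-1)]
    simp only [negMulLog]
    nlinarith [mul_le_mul_of_nonneg_left hlog hε.le]
  · nlinarith [negMulLog_le_exp_neg_one hx, negMulLog_nonneg (add_nonneg hx hε) h1,
      negMulLog_nonneg hε (by linarith), exp_pos (-1), log_two_gt_d9]

lemma abs_negMulLog_sub_negMulLog_le {x y : ℝ} (hx : 0 ≤ x) (hx1 : x ≤ 1) (hy : 0 ≤ y)
    (hy1 : y ≤ 1) : |negMulLog x - negMulLog y| ≤ negMulLog |x - y| + |x - y| * log 2 := by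
  wlog hxy : y ≤ x generalizing x y
  · rw [abs_sub_comm, abs_sub_comm x]
    exact this hy hy1 hx hx1 (le_of_not_ge hxy)
  obtain ⟨ε, hε, rfl⟩ : ∃ ε, 0 ≤ ε ∧ x = y + ε := ⟨x - y, by linarith, by ring⟩
  rw [add_sub_cancel_left, abs_of_nonneg hε, abs_sub_le_iff]
  constructor
  · linarith [negMulLog_add_le hy hε, mul_nonneg hε (log_nonneg one_le_two)]
  · exact negMulLog_sub_negMulLog_add_le hy hε hx1

lemma sum_negMulLog_le {ι : Type*} (s : Finset ι) {x : ι → ℝ} (hx : ∀ i ∈ s, 0 ≤ x i) :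
    ∑ i ∈ s, negMulLog (x i) ≤ (∑ i ∈ s, x i) * log (#s / ∑ i ∈ s, x i) := by
  rcases s.eq_empty_or_nonempty with rfl | hs
  · simp
  have hcard : (0 : ℝ) < #s := by exact_mod_cast hs.card_pos
  have hjensen := concaveOn_negMulLog.le_map_sum (t := s) (w := fun _ ↦ (#s : ℝ)⁻¹)
    (fun _ _ ↦ by positivity) (by simp [hcard.ne']) hx
  simp only [smul_eq_mul, ← mul_sum, inv_mul_le_iff₀ hcard] at hjensen
  refine hjensen.trans (le_of_eq ?_)
  rw [negMulLog, ← inv_div, log_inv]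
  field_simp

lemma mul_log_div_eq_negMulLog_add {c : ℝ} (hc : c ≠ 0) (s : ℝ) :
    s * log (c / s) = negMulLog s + s * log c := by
  rcases eq_or_ne s 0 with rfl | hs
  · simp
  rw [log_div hc hs, negMulLog]
  ring

lemma mul_log_div_le_mul_log_div {s t c : ℝ} (hs : 0 ≤ s) (hst : s ≤ t) (hc : exp 1 * t ≤ c) :
    s * log (c / s) ≤ t * log (c / t) := by
  rcases (hs.trans hst).eq_or_lt with rfl | ht
  · obtain rfl : s = 0 := by linarith
    simp
  have hc0 : 0 < c := (mul_pos (exp_pos 1) ht).trans_le hc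
  have hlogc : log t + 1 ≤ log c := by
    simpa [log_mul (exp_pos 1).ne' ht.ne', add_comm] using log_le_log (by positivity) hc
  rw [mul_log_div_eq_negMulLog_add hc0.ne', mul_log_div_eq_negMulLog_add hc0.ne']
  nlinarith [negMulLog_le_tangent_line hs ht]

end Real

section Entropy

variable {M : Type*} [Fintype M] {p q : M → ℝ}

lemma IsPMF.le_one (hp : IsPMF p) (y : M) : p y ≤ 1 :=
  hp.2 ▸ single_le_sum (fun z _ ↦ hp.1 z) (mem_univ y)

lemma shannonEntropy_eq_sum_negMulLog (p : M → ℝ) :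
    shannonEntropy p = ∑ y, negMulLog (p y) := by
  simp [shannonEntropy, negMulLog, sum_neg_distrib]

lemma shannonEntropy_nonneg (hp : IsPMF p) : 0 ≤ shannonEntropy p := by
  rw [shannonEntropy_eq_sum_negMulLog]
  exact sum_nonneg fun y _ ↦ negMulLog_nonneg (hp.1 y) (hp.le_one y)

lemma shannonEntropy_le_log_card (hp : IsPMF p) : shannonEntropy p ≤ log (Fintype.card M) := by
  simpa [shannonEntropy_eq_sum_negMulLog, hp.2] using sum_negMulLog_le univ fun y _ ↦ hp.1 y

lemma abs_shannonEntropy_sub_le_log_card (hp : IsPMF p) (hq : IsPMF q) :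
    |shannonEntropy p - shannonEntropy q| ≤ log (Fintype.card M) :=
  abs_sub_le_of_nonneg_of_le (shannonEntropy_nonneg hp) (shannonEntropy_le_log_card hp)
    (shannonEntropy_nonneg hq) (shannonEntropy_le_log_card hq)

lemma tvDist_nonneg (p q : M → ℝ) : 0 ≤ tvDist p q :=
  div_nonneg (sum_nonneg fun _ _ ↦ abs_nonneg _) zero_le_two

lemma abs_shannonEntropy_sub_le [Nonempty M] (hp : IsPMF p) (hq : IsPMF q) :
    |shannonEntropy p - shannonEntropy q| ≤
      2 * tvDist p q * log (Fintype.card M / tvDist p q) := by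
  set t := tvDist p q
  have hsum : ∑ y, |p y - q y| = 2 * t := by simp only [t, tvDist]; ring
  have hjensen := sum_negMulLog_le univ fun y _ ↦ abs_nonneg (p y - q y)
  rw [hsum, card_univ] at hjensen
  calc |shannonEntropy p - shannonEntropy q|
      = |∑ y, (negMulLog (p y) - negMulLog (q y))| := by
        rw [shannonEntropy_eq_sum_negMulLog, shannonEntropy_eq_sum_negMulLog, sum_sub_distrib]
    _ ≤ ∑ y, |negMulLog (p y) - negMulLog (q y)| := abs_sum_le_sum_abs _ _
    _ ≤ ∑ y, (negMulLog |p y - q y| + |p y - q y| * log 2) := sum_le_sum fun y _ ↦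
        abs_negMulLog_sub_negMulLog_le (hp.1 y) (hp.le_one y) (hq.1 y) (hq.le_one y)
    _ = ∑ y, negMulLog |p y - q y| + 2 * t * log 2 := by rw [sum_add_distrib, ← sum_mul, hsum]
    _ ≤ 2 * t * log (Fintype.card M / (2 * t)) + 2 * t * log 2 := by gcongr
    _ = 2 * t * log (Fintype.card M / t) := by
        rcases eq_or_ne t 0 with ht | ht
        · simp [ht]
        rw [← mul_add, ← log_mul (by positivity) two_ne_zero]
        field_simp

end Entropy

lemma log_natCast_le_two_mul_mul_log_div {n : ℕ} (hn : n ≠ 0) {δ : ℝ} (hδ0 : 0 < δ) (hδ1 : δ < 1)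
    (hnδ : n < exp 1 * δ) : log n ≤ 2 * δ * log (n / δ) := by
  rw [log_div (by positivity) hδ0.ne']
  have hlogδ : log δ ≤ 0 := log_nonpos hδ0.le hδ1.le
  obtain rfl | hn2 : n = 1 ∨ 2 ≤ n := by omega
  · simp only [Nat.cast_one, log_one]
    nlinarith
  have hn2' : (2 : ℝ) ≤ n := by exact_mod_cast hn2
  have hδhalf : 1 ≤ 2 * δ := by nlinarith [exp_one_lt_d9]
  nlinarith [log_nonneg (one_le_two.trans hn2')]

/-- If two pmfs on a finite set `M` are within total variation distance `δ ∈ (0,1)`,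
their Shannon entropies differ by at most `2δ·log(|M|/δ)`. -/
theorem entropy_diff_le_of_tv {M : Type*} [Fintype M] [Nonempty M]
    (p q : M → ℝ) (δ : ℝ) (hp : IsPMF p) (hq : IsPMF q)
    (hδ : δ ∈ Set.Ioo (0:ℝ) 1) (htv : tvDist p q ≤ δ) :
    |shannonEntropy p - shannonEntropy q| ≤ 2 * δ * Real.log ((Fintype.card M : ℝ) / δ) := by
  obtain ⟨hδ0, hδ1⟩ := hδ
  rcases le_or_gt (exp 1 * δ) (Fintype.card M) with hlarge | hsmall
  · calc |shannonEntropy p - shannonEntropy q|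
        ≤ 2 * tvDist p q * log (Fintype.card M / tvDist p q) := abs_shannonEntropy_sub_le hp hq
      _ ≤ 2 * δ * log (Fintype.card M / δ) := by
        simpa only [mul_assoc] using mul_le_mul_of_nonneg_left
          (mul_log_div_le_mul_log_div (tvDist_nonneg p q) htv hlarge) zero_le_two
  · exact (abs_shannonEntropy_sub_le_log_card hp hq).trans
      (log_natCast_le_two_mul_mul_log_div Fintype.card_ne_zero hδ0 hδ1 hsmall)
end

section
/- Let θ be a random parameter, X_{1:n} a dataset, and X a test point such that X and A(X_{1:n}) are conditionally independent given X_{1:n} and θ ⟂ A(X_{1:n}) | X_{1:n}. Suppose (θ, X_{1:n}) satisfies τ-SDPI (exactly, δ=0) and (X, X_{1:n}) satisfies ρ-SDPI (exactly). Then I(A(X_{1:n}); X_{1:n} | θ) ≥ ((1−τ)/ρ)·I(A(X_{1:n}); X). -/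
open scoped BigOperators

/-- Mutual information of a joint pmf on a product of finite sets (natural log). -/
noncomputable def miPMF {A M : Type*} [Fintype A] [Fintype M] (j : A × M → ℝ) : ℝ :=
  ∑ a, ∑ m, j (a, m) *
    Real.log (j (a, m) / ((∑ m', j (a, m')) * (∑ a', j (a', m))))

/-- Conditional mutual information `I(S;M | T)` of a joint pmf on `T × S × M`:
`∑ p(t,s,m)·log( p(t,s,m)·p(t) / (p(t,s)·p(t,m)) )`. -/
noncomputable def condMI {T S M : Type*} [Fintype T] [Fintype S] [Fintype M]
    (j : T × S × M → ℝ) : ℝ :=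
  ∑ t, ∑ s, ∑ m, j (t, s, m) *
    Real.log ((j (t, s, m) * (∑ s', ∑ m', j (t, s', m'))) /
      ((∑ m', j (t, s, m')) * (∑ s', j (t, s', m))))

/-- A joint pmf `j` on `A × B` satisfies the `ρ`-SDPI: for every random variable `M`
obtained by post-processing `B` (a Markov kernel out of `B`), `I(M;A) ≤ ρ·I(M;B)`. -/
def SatisfiesSDPI {A B : Type*} [Fintype A] [Fintype B] (ρ : ℝ) (j : A × B → ℝ) : Prop :=
  ∀ (M : Type) [Fintype M], ∀ κ : B → M → ℝ, (∀ b, IsPMF (κ b)) →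
    miPMF (fun am : A × M => ∑ b, j (am.1, b) * κ b am.2)
      ≤ ρ * miPMF (fun bm : B × M => (∑ a, j (a, bm.1)) * κ bm.1 bm.2)

lemma mul_log_ge_sub {a b : ℝ} (ha : 0 ≤ a) (hb : 0 ≤ b) (h : 0 < a → 0 < b) :
    a - b ≤ a * Real.log (a / b) := by
  rcases ha.eq_or_lt with h0 | h0
  · simpa [← h0] using hb
  · have hb' := h h0
    have hlog : Real.log (b / a) ≤ b / a - 1 := Real.log_le_sub_one_of_pos (div_pos hb' h0)
    have hrw : Real.log (a / b) = -Real.log (b / a) := by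
      rw [← Real.log_inv, inv_div]
    have hba : a * (b / a) = b := mul_div_cancel₀ b h0.ne'
    nlinarith [mul_le_mul_of_nonneg_left hlog h0.le]

lemma miPMF_nonneg {A M : Type*} [Fintype A] [Fintype M] (j : A × M → ℝ)
    (hj : ∀ p, 0 ≤ j p) (hsum : ∑ a, ∑ m, j (a, m) = 1) : 0 ≤ miPMF j := by
  have key : ∀ a m, j (a, m) - (∑ m', j (a, m')) * (∑ a', j (a', m))
      ≤ j (a, m) * Real.log (j (a, m) / ((∑ m', j (a, m')) * (∑ a', j (a', m)))) := by
    intro a m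
    refine mul_log_ge_sub (hj _) (mul_nonneg (Finset.sum_nonneg fun _ _ => hj _)
      (Finset.sum_nonneg fun _ _ => hj _)) fun hpos => ?_
    have h1 : j (a, m) ≤ ∑ m', j (a, m') :=
      Finset.single_le_sum (f := fun m' => j (a, m')) (fun _ _ => hj _) (Finset.mem_univ m)
    have h2 : j (a, m) ≤ ∑ a', j (a', m) :=
      Finset.single_le_sum (f := fun a' => j (a', m)) (fun _ _ => hj _) (Finset.mem_univ a)
    exact mul_pos (lt_of_lt_of_le hpos h1) (lt_of_lt_of_le hpos h2)
  have hb : ∑ a, ∑ m, (∑ m', j (a, m')) * (∑ a', j (a', m)) = 1 := by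
    have hcol : ∑ m, ∑ a', j (a', m) = 1 := by rw [Finset.sum_comm]; exact hsum
    calc ∑ a, ∑ m, (∑ m', j (a, m')) * (∑ a', j (a', m))
        = ∑ a, (∑ m', j (a, m')) * ∑ m, (∑ a', j (a', m)) := by
          simp [Finset.mul_sum]
      _ = (∑ a, ∑ m', j (a, m')) * ∑ m, (∑ a', j (a', m)) := by rw [Finset.sum_mul]
      _ = 1 := by rw [hsum, hcol, one_mul]
  have hz : (0:ℝ) = ∑ a, ∑ m, (j (a, m) - (∑ m', j (a, m')) * (∑ a', j (a', m))) := by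
    simp only [Finset.sum_sub_distrib, hsum, hb, sub_self]
  rw [miPMF, hz]
  exact Finset.sum_le_sum fun a _ => Finset.sum_le_sum fun m _ => key a m

lemma condMI_nonneg {T S M : Type*} [Fintype T] [Fintype S] [Fintype M]
    (j : T × S × M → ℝ) (hj : ∀ p, 0 ≤ j p) : 0 ≤ condMI j := by
  rw [condMI]
  refine Finset.sum_nonneg fun t _ => ?_
  set P := ∑ s', ∑ m', j (t, s', m') with hP
  have hPnn : 0 ≤ P := Finset.sum_nonneg fun _ _ => Finset.sum_nonneg fun _ _ => hj _
  have hrowle : ∀ s, (∑ m', j (t, s, m')) ≤ P := fun s =>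
    Finset.single_le_sum (f := fun s' => ∑ m', j (t, s', m'))
      (fun _ _ => Finset.sum_nonneg fun _ _ => hj _) (Finset.mem_univ s)
  have key : ∀ s m, j (t, s, m) - (∑ m', j (t, s, m')) * (∑ s', j (t, s', m)) / P
      ≤ j (t, s, m) * Real.log ((j (t, s, m) * P) /
        ((∑ m', j (t, s, m')) * (∑ s', j (t, s', m)))) := by
    intro s m
    have hR0 : 0 ≤ ∑ m', j (t, s, m') := Finset.sum_nonneg fun _ _ => hj _
    have hC0 : 0 ≤ ∑ s', j (t, s', m) := Finset.sum_nonneg fun _ _ => hj _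
    rcases eq_or_lt_of_le (hj (t, s, m)) with h0 | h0
    · have hbnn : 0 ≤ (∑ m', j (t, s, m')) * (∑ s', j (t, s', m)) / P :=
        div_nonneg (mul_nonneg hR0 hC0) hPnn
      simp only [← h0, zero_sub, zero_mul]; linarith
    · have hR : 0 < ∑ m', j (t, s, m') := lt_of_lt_of_le h0
        (Finset.single_le_sum (f := fun m' => j (t, s, m')) (fun _ _ => hj _)
          (Finset.mem_univ m))
      have hC : 0 < ∑ s', j (t, s', m) := lt_of_lt_of_le h0
        (Finset.single_le_sum (f := fun s' => j (t, s', m)) (fun _ _ => hj _)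
          (Finset.mem_univ s))
      have hPpos : 0 < P := lt_of_lt_of_le hR (hrowle s)
      have harg : (j (t, s, m) * P) / ((∑ m', j (t, s, m')) * (∑ s', j (t, s', m)))
          = j (t, s, m) / ((∑ m', j (t, s, m')) * (∑ s', j (t, s', m)) / P) := by
        field_simp
      rw [harg]
      exact mul_log_ge_sub (hj _) (div_nonneg (mul_nonneg hR.le hC.le) hPnn)
        (fun _ => div_pos (mul_pos hR hC) hPpos)
  refine le_trans ?_ (Finset.sum_le_sum fun s _ => Finset.sum_le_sum fun m _ => key s m)
  rcases eq_or_lt_of_le hPnn with hP0 | hPpos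
  · have hzero : ∀ s m, j (t, s, m) = 0 := by
      intro s m
      have h2 : j (t, s, m) ≤ ∑ m', j (t, s, m') :=
        Finset.single_le_sum (f := fun m' => j (t, s, m')) (fun _ _ => hj _)
          (Finset.mem_univ m)
      have := hj (t, s, m)
      have := hrowle s
      linarith [hP0.symm]
    simp [hzero]
  · have hbsum : ∑ s, ∑ m, (∑ m', j (t, s, m')) * (∑ s', j (t, s', m)) / P = P := by
      have hPP : ∑ s, ∑ m, (∑ m', j (t, s, m')) * (∑ s', j (t, s', m)) = P * P := by
        have hcol : ∑ m, ∑ s', j (t, s', m) = P := by rw [hP, Finset.sum_comm]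
        calc ∑ s, ∑ m, (∑ m', j (t, s, m')) * (∑ s', j (t, s', m))
            = ∑ s, (∑ m', j (t, s, m')) * ∑ m, (∑ s', j (t, s', m)) := by
              simp [Finset.mul_sum]
          _ = (∑ s, ∑ m', j (t, s, m')) * ∑ m, (∑ s', j (t, s', m)) := by
              rw [Finset.sum_mul]
          _ = P * P := by rw [hcol]
      calc ∑ s, ∑ m, (∑ m', j (t, s, m')) * (∑ s', j (t, s', m)) / P
          = (∑ s, ∑ m, (∑ m', j (t, s, m')) * (∑ s', j (t, s', m))) / P := by
            simp [Finset.sum_div]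
        _ = P := by rw [hPP, mul_div_assoc, div_self hPpos.ne', mul_one]
    have hasum : ∑ s, ∑ m, j (t, s, m) = P := rfl
    have : ∑ s, ∑ m, (j (t, s, m) - (∑ m', j (t, s, m')) * (∑ s', j (t, s', m)) / P)
        = 0 := by
      simp only [Finset.sum_sub_distrib, hasum, hbsum, sub_self]
    rw [this]

lemma log_term_combine {a k P C R Q : ℝ} (ha : 0 ≤ a) (hk : 0 ≤ k)
    (haP : a ≤ P) (haR : a ≤ R) (hC : a * k ≤ C) (hQ : R * k ≤ Q) :
    a * k * Real.log ((a * k * P) / (a * C)) + a * k * Real.log (C / (P * Q))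
      = a * k * Real.log ((R * k) / (R * Q)) := by
  rcases (mul_nonneg ha hk).eq_or_lt with h0 | h0
  · rw [← h0]; ring
  · have ha' : 0 < a := by
      rcases ha.eq_or_lt with h | h
      · exfalso; rw [← h, zero_mul] at h0; exact lt_irrefl 0 h0
      · exact h
    have hk' : 0 < k := by
      rcases hk.eq_or_lt with h | h
      · exfalso; rw [← h, mul_zero] at h0; exact lt_irrefl 0 h0
      · exact h
    have hP : 0 < P := lt_of_lt_of_le ha' haP
    have hR : 0 < R := lt_of_lt_of_le ha' haR
    have hC' : 0 < C := lt_of_lt_of_le h0 hC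
    have hQ' : 0 < Q := lt_of_lt_of_le (mul_pos hR hk') hQ
    rw [← mul_add]
    congr 1
    rw [← Real.log_mul (by positivity) (by positivity)]
    congr 1
    field_simp

lemma chain_rule {T S M : Type*} [Fintype T] [Fintype S] [Fintype M]
    (w : T → S → ℝ) (hw : ∀ t s, 0 ≤ w t s) (κ : S → M → ℝ)
    (hκ0 : ∀ s m, 0 ≤ κ s m) (hκ1 : ∀ s, ∑ m, κ s m = 1) :
    condMI (fun p : T × S × M => w p.1 p.2.1 * κ p.2.1 p.2.2)
      = miPMF (fun sm : S × M => (∑ t, w t sm.1) * κ sm.1 sm.2)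
        - miPMF (fun am : T × M => ∑ s, w am.1 s * κ s am.2) := by
  rw [eq_sub_iff_add_eq]
  have hA : condMI (fun p : T × S × M => w p.1 p.2.1 * κ p.2.1 p.2.2)
      = ∑ t, ∑ s, ∑ m, w t s * κ s m *
          Real.log ((w t s * κ s m * (∑ s', w t s')) /
            (w t s * (∑ s', w t s' * κ s' m))) := by
    rw [condMI]
    refine Finset.sum_congr rfl fun t _ => Finset.sum_congr rfl fun s _ =>
      Finset.sum_congr rfl fun m _ => ?_
    have h1 : ∑ m', w t s * κ s m' = w t s := by
      rw [← Finset.mul_sum, hκ1, mul_one]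
    have h2 : ∑ s', ∑ m', w t s' * κ s' m' = ∑ s', w t s' := by
      refine Finset.sum_congr rfl fun s' _ => ?_
      rw [← Finset.mul_sum, hκ1, mul_one]
    rw [h1, h2]
  have hB : miPMF (fun am : T × M => ∑ s, w am.1 s * κ s am.2)
      = ∑ t, ∑ s, ∑ m, w t s * κ s m *
          Real.log ((∑ s', w t s' * κ s' m) /
            ((∑ s', w t s') * (∑ s', (∑ t', w t' s') * κ s' m))) := by
    rw [miPMF]
    refine Finset.sum_congr rfl fun t _ => ?_
    have hrow : ∑ m', ∑ s', w t s' * κ s' m' = ∑ s', w t s' := by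
      rw [Finset.sum_comm]
      refine Finset.sum_congr rfl fun s' _ => ?_
      rw [← Finset.mul_sum, hκ1, mul_one]
    have hcol : ∀ m, ∑ t', ∑ s', w t' s' * κ s' m = ∑ s', (∑ t', w t' s') * κ s' m := by
      intro m
      rw [Finset.sum_comm]
      exact Finset.sum_congr rfl fun s' _ => (Finset.sum_mul _ _ _).symm
    calc ∑ m, (∑ s, w t s * κ s m) *
          Real.log ((∑ s, w t s * κ s m) /
            ((∑ m', ∑ s, w t s * κ s m') * (∑ t', ∑ s, w t' s * κ s m)))
        = ∑ m, ∑ s, w t s * κ s m *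
            Real.log ((∑ s', w t s' * κ s' m) /
              ((∑ s', w t s') * (∑ s', (∑ t', w t' s') * κ s' m))) := by
          refine Finset.sum_congr rfl fun m _ => ?_
          rw [hrow, hcol m, Finset.sum_mul]
      _ = ∑ s, ∑ m, w t s * κ s m *
            Real.log ((∑ s', w t s' * κ s' m) /
              ((∑ s', w t s') * (∑ s', (∑ t', w t' s') * κ s' m))) :=
          Finset.sum_comm ..
  have hCC : miPMF (fun sm : S × M => (∑ t, w t sm.1) * κ sm.1 sm.2)
      = ∑ t, ∑ s, ∑ m, w t s * κ s m *
          Real.log (((∑ t', w t' s) * κ s m) /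
            ((∑ t', w t' s) * (∑ s', (∑ t', w t' s') * κ s' m))) := by
    rw [miPMF]
    calc ∑ s, ∑ m, (∑ t, w t s) * κ s m *
          Real.log ((∑ t, w t s) * κ s m /
            ((∑ m', (∑ t, w t s) * κ s m') * (∑ s', (∑ t, w t s') * κ s' m)))
        = ∑ s, ∑ m, ∑ t, w t s * κ s m *
            Real.log (((∑ t', w t' s) * κ s m) /
              ((∑ t', w t' s) * (∑ s', (∑ t', w t' s') * κ s' m))) := by
          refine Finset.sum_congr rfl fun s _ => Finset.sum_congr rfl fun m _ => ?_
          rw [← Finset.mul_sum, hκ1, mul_one, Finset.sum_mul, Finset.sum_mul]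
      _ = ∑ s, ∑ t, ∑ m, w t s * κ s m *
            Real.log (((∑ t', w t' s) * κ s m) /
              ((∑ t', w t' s) * (∑ s', (∑ t', w t' s') * κ s' m))) :=
          Finset.sum_congr rfl fun s _ => Finset.sum_comm ..
      _ = ∑ t, ∑ s, ∑ m, w t s * κ s m *
            Real.log (((∑ t', w t' s) * κ s m) /
              ((∑ t', w t' s) * (∑ s', (∑ t', w t' s') * κ s' m))) :=
          Finset.sum_comm ..
  rw [hA, hB, hCC, ← Finset.sum_add_distrib]
  refine Finset.sum_congr rfl fun t _ => ?_
  rw [← Finset.sum_add_distrib]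
  refine Finset.sum_congr rfl fun s _ => ?_
  rw [← Finset.sum_add_distrib]
  refine Finset.sum_congr rfl fun m _ => ?_
  refine log_term_combine (hw t s) (hκ0 s m) ?_ ?_ ?_ ?_
  · exact Finset.single_le_sum (f := fun s' => w t s') (fun _ _ => hw t _) (Finset.mem_univ s)
  · exact Finset.single_le_sum (f := fun t' => w t' s) (fun _ _ => hw _ s) (Finset.mem_univ t)
  · exact Finset.single_le_sum (f := fun s' => w t s' * κ s' m)
      (fun s' _ => mul_nonneg (hw t s') (hκ0 s' m)) (Finset.mem_univ s)
  · exact Finset.single_le_sum (f := fun s' => (∑ t', w t' s') * κ s' m)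
      (fun s' _ => mul_nonneg (Finset.sum_nonneg fun _ _ => hw _ _) (hκ0 s' m))
      (Finset.mem_univ s)

/-- Let `θ` be a random parameter, `X_{1:n} = S` the dataset and `X` a test point,
with joint pmf `q` on `Θ × X × S`.  The learning algorithm `A = κ(S)` is a post-processing
of the dataset, so `X ⟂ A(S) | S` and `θ ⟂ A(S) | S` hold by construction.
If `(θ, X_{1:n})` satisfies `τ`-SDPI and `(X, X_{1:n})` satisfies `ρ`-SDPI, then
`I(A(X_{1:n}); X_{1:n} | θ) ≥ ((1−τ)/ρ)·I(A(X_{1:n}); X)`. -/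
theorem excess_memorization_of_sdpi
    {Θ X S : Type*} [Fintype Θ] [Fintype X] [Fintype S] {Mc : Type} [Fintype Mc]
    (τ ρ : ℝ) (hρ : 0 < ρ)
    (q : Θ × X × S → ℝ) (hq : IsPMF q)
    (hτ : SatisfiesSDPI τ (fun ts : Θ × S => ∑ x, q (ts.1, x, ts.2)))
    (hρsdpi : SatisfiesSDPI ρ (fun xs : X × S => ∑ t, q (t, xs.1, xs.2)))
    (κ : S → Mc → ℝ) (hκ : ∀ s, IsPMF (κ s)) :
    condMI (fun tsm : Θ × S × Mc => (∑ x, q (tsm.1, x, tsm.2.1)) * κ tsm.2.1 tsm.2.2)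
      ≥ ((1 - τ) / ρ) *
        miPMF (fun xm : X × Mc => ∑ t, ∑ s, q (t, xm.1, s) * κ s xm.2) := by
  classical
  set w : Θ → S → ℝ := fun t s => ∑ x, q (t, x, s) with hw_def
  have hw : ∀ t s, 0 ≤ w t s := fun t s => Finset.sum_nonneg fun _ _ => hq.1 _
  have hκ0 : ∀ s m, 0 ≤ κ s m := fun s => (hκ s).1
  have hκ1 : ∀ s, ∑ m, κ s m = 1 := fun s => (hκ s).2
  have hchain := chain_rule w hw κ hκ0 hκ1
  have hq1 : ∑ t, ∑ x, ∑ s, q (t, x, s) = 1 := by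
    have := hq.2
    simpa [Fintype.sum_prod_type] using this
  -- the two SDPI hypotheses, specialized
  have h2 := hτ Mc κ hκ
  simp only [] at h2
  have h3 := hρsdpi Mc κ hκ
  simp only [] at h3
  -- identify the pmfs appearing in h3 with those in the goal / chain rule
  have hIXfun : (fun xm : X × Mc => ∑ b, (∑ t, q (t, xm.1, b)) * κ b xm.2)
      = fun xm : X × Mc => ∑ t, ∑ s, q (t, xm.1, s) * κ s xm.2 := by
    funext xm
    calc ∑ b, (∑ t, q (t, xm.1, b)) * κ b xm.2
        = ∑ b, ∑ t, q (t, xm.1, b) * κ b xm.2 :=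
          Finset.sum_congr rfl fun b _ => Finset.sum_mul _ _ _
      _ = ∑ t, ∑ s, q (t, xm.1, s) * κ s xm.2 := Finset.sum_comm ..
  have hSfun : (fun bm : S × Mc => (∑ a, ∑ t, q (t, a, bm.1)) * κ bm.1 bm.2)
      = fun sm : S × Mc => (∑ t, w t sm.1) * κ sm.1 sm.2 := by
    funext sm
    rw [hw_def]
    rw [Finset.sum_comm]
  rw [hIXfun, hSfun] at h3
  -- nonnegativity facts
  have hIXnn : 0 ≤ miPMF (fun xm : X × Mc => ∑ t, ∑ s, q (t, xm.1, s) * κ s xm.2) := by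
    refine miPMF_nonneg _ (fun p => Finset.sum_nonneg fun t _ =>
      Finset.sum_nonneg fun s _ => mul_nonneg (hq.1 _) (hκ0 s _)) ?_
    calc ∑ x, ∑ m, ∑ t, ∑ s, q (t, x, s) * κ s m
        = ∑ x, ∑ t, ∑ s, q (t, x, s) := by
          refine Finset.sum_congr rfl fun x _ => ?_
          rw [Finset.sum_comm]
          refine Finset.sum_congr rfl fun t _ => ?_
          rw [Finset.sum_comm]
          refine Finset.sum_congr rfl fun s _ => ?_
          rw [← Finset.mul_sum, hκ1, mul_one]
      _ = 1 := by rw [Finset.sum_comm]; exact hq1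
  have hCnn : 0 ≤ condMI (fun p : Θ × S × Mc => w p.1 p.2.1 * κ p.2.1 p.2.2) :=
    condMI_nonneg _ fun p => mul_nonneg (hw _ _) (hκ0 _ _)
  -- conclude
  show condMI (fun p : Θ × S × Mc => w p.1 p.2.1 * κ p.2.1 p.2.2) ≥ _
  rw [ge_iff_le, hchain]
  set IS := miPMF (fun sm : S × Mc => (∑ t, w t sm.1) * κ sm.1 sm.2) with hIS
  set Iθ := miPMF (fun am : Θ × Mc => ∑ s, w am.1 s * κ s am.2) with hIθ
  set IX := miPMF (fun xm : X × Mc => ∑ t, ∑ s, q (t, xm.1, s) * κ s xm.2) with hIX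
  rcases le_or_gt τ 1 with hτ1 | hτ1
  · have hc : 0 ≤ (1 - τ) / ρ := div_nonneg (by linarith) hρ.le
    calc (1 - τ) / ρ * IX ≤ (1 - τ) / ρ * (ρ * IS) := mul_le_mul_of_nonneg_left h3 hc
      _ = (1 - τ) * IS := by field_simp
      _ ≤ IS - Iθ := by nlinarith [h2]
  · have hc : (1 - τ) / ρ ≤ 0 := div_nonpos_of_nonpos_of_nonneg (by linarith) hρ.le
    have h0 : (1 - τ) / ρ * IX ≤ 0 := mul_nonpos_of_nonpos_of_nonneg hc hIXnn
    rw [hchain] at hCnn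
    linarith
end

section
/- Let λ ∈ (0,1), n ∈ ℕ with n < 1/(10λ²). Let X be the product distribution on {±1}^n with Pr[X_i = 1] = (1+λ)/2 for all i, and Y the product distribution with Pr[Y_i = 1] = (1−λ)/2. Then for every δ ∈ (0,1) and ρ = √(8n·log(1/δ))·λ, there exist distributions A, B on {±1}^n such that d_TV(X, ((1+ρ)/2)A + ((1−ρ)/2)B) < δ and d_TV(Y, ((1−ρ)/2)A + ((1+ρ)/2)B) < δ. -/
open scoped BigOperators

/-!
Write `X` for the `λ`-biased cube and `Y = X ∘ compl` for its mirror image. Put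
`A, B = (X + Y)/2 ± D`, where `D` is `(X - Y)/(2ρ)` clamped to `[-(X + Y)/2, (X + Y)/2]`.
Then `A, B ≥ 0`, and `D` is odd under the involution `compl`, so `A` and `B` have mass one.
The mixtures `((1 ± ρ)/2) A + ((1 ∓ ρ)/2) B = (X + Y)/2 ± ρ D` reproduce `X` and `Y` exactly
wherever `|X - Y| ≤ ρ (X + Y)`. The remaining error is at most the `X`-mass of
`{X - Y > ρ (X + Y)}`, i.e. of the event where the privacy loss `log (X / Y)` exceeds
`log ((1 + ρ)/(1 - ρ)) ≥ 2ρ`. On the cube, `log (X / Y)` is the spin sum times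
`log ((1 + λ)/(1 - λ)) ≤ 2λ/(1 - λ²)`. So that event forces the spin sum beyond its mean
`nλ` by `√(2n log (1/δ))`, and a Chernoff bound gives it probability at most `δ`.

When `√n λ < δ`, `A = B = X` already works, because Le Cam's inequality bounds `d_TV(X, Y)`
by `√(1 - (1 - λ²)ⁿ) ≤ √n λ`. Otherwise `n ≥ 1` and `δ < 1/2`, as the Chernoff step needs.
-/
open Function Real

noncomputable def clampShift (ρ p q : ℝ) : ℝ :=
  max (-((p + q) / 2)) (min ((p - q) / (2 * ρ)) ((p + q) / 2))

section ClampShift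

variable {ρ p q : ℝ}

theorem abs_clampShift_le (h : 0 ≤ p + q) : |clampShift ρ p q| ≤ (p + q) / 2 :=
  abs_le.mpr ⟨le_max_left _ _, max_le (by linarith) (min_le_right _ _)⟩

theorem clampShift_swap (h : 0 ≤ p + q) : clampShift ρ q p = -clampShift ρ p q := by
  unfold clampShift
  rw [add_comm q p, show (q - p) / (2 * ρ) = -((p - q) / (2 * ρ)) by ring]
  simp only [max_def, min_def]
  split_ifs <;> linarith

theorem abs_sub_mul_clampShift_le (hρ : 0 < ρ) (hp : 0 ≤ p) (hq : 0 ≤ q) :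
    |(p - q) / 2 - ρ * clampShift ρ p q| ≤
      ((if ρ * (p + q) < p - q then p else 0) + (if ρ * (q + p) < q - p then q else 0)) / 2 := by
  have hd : p - q = 2 * ρ * ((p - q) / (2 * ρ)) := by field_simp
  rw [clampShift, add_comm q p]
  generalize (p - q) / (2 * ρ) = d at hd
  rw [show q - p = -(p - q) by ring, hd, show 2 * ρ * d / 2 = ρ * d by ring]
  have hS : 0 ≤ ρ * (p + q) := by positivity
  rcases le_or_gt d ((p + q) / 2) with hup | hup
  · rw [min_eq_left hup]
    rcases le_or_gt (-((p + q) / 2)) d with hlo | hlo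
    · rw [max_eq_right hlo, if_neg (by nlinarith), if_neg (by nlinarith)]
      simp
    · rw [max_eq_left hlo.le, if_neg (by nlinarith), if_pos (by nlinarith),
        abs_of_nonpos (by nlinarith)]
      nlinarith
  · rw [min_eq_right hup.le, max_eq_right (by linarith), if_pos (by nlinarith),
      if_neg (by nlinarith), abs_of_nonneg (by nlinarith)]
    nlinarith

end ClampShift

section Mixture

variable {α : Type*} [Fintype α]

def ApproxByBiasedMixture (P Q : α → ℝ) (ρ δ : ℝ) : Prop :=
  ∃ A B : α → ℝ, IsPMF A ∧ IsPMF B ∧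
    tvDist P (fun v => (1 + ρ) / 2 * A v + (1 - ρ) / 2 * B v) < δ ∧
    tvDist Q (fun v => (1 - ρ) / 2 * A v + (1 + ρ) / 2 * B v) < δ

theorem tvDist_comm (P Q : α → ℝ) : tvDist P Q = tvDist Q P := by
  simp only [tvDist, abs_sub_comm]

theorem approxByBiasedMixture_of_tvDist_lt {P Q : α → ℝ} {ρ δ : ℝ} (hP : IsPMF P)
    (hδ : 0 < δ) (hPQ : tvDist P Q < δ) : ApproxByBiasedMixture P Q ρ δ := by
  have hmix : (fun v => (1 + ρ) / 2 * P v + (1 - ρ) / 2 * P v) = P := by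
    funext v; ring
  have hmix' : (fun v => (1 - ρ) / 2 * P v + (1 + ρ) / 2 * P v) = P := by
    funext v; ring
  refine ⟨P, P, hP, hP, ?_, ?_⟩
  · rw [hmix]
    simpa [tvDist] using hδ
  · rwa [hmix', tvDist_comm]

/-- For `0 < ρ < 1` this is the `P`-mass of `{P / Q > (1 + ρ)/(1 - ρ)}`. -/
noncomputable def lossTail (P Q : α → ℝ) (ρ : ℝ) : ℝ :=
  ∑ v, if ρ * (P v + Q v) < P v - Q v then P v else 0

variable {σ : α → α} {P : α → ℝ} {ρ : ℝ}

theorem sum_abs_sub_mul_clampShift_le_lossTail (hσ : Involutive σ) (hP : ∀ v, 0 ≤ P v)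
    (hρ : 0 < ρ) :
    ∑ v, |(P v - P (σ v)) / 2 - ρ * clampShift ρ (P v) (P (σ v))| ≤
      lossTail P (fun v => P (σ v)) ρ := by
  have hswap : ∑ v, (if ρ * (P (σ v) + P v) < P (σ v) - P v then P (σ v) else 0) =
      lossTail P (fun v => P (σ v)) ρ := by
    rw [lossTail, ← Equiv.sum_comp hσ.toPerm]
    simp only [Involutive.coe_toPerm, hσ _]
  have := Finset.sum_le_sum fun v (_ : v ∈ Finset.univ) =>
    abs_sub_mul_clampShift_le hρ (hP v) (hP (σ v))
  rw [← Finset.sum_div, Finset.sum_add_distrib, hswap] at this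
  exact this.trans_eq (by rw [lossTail]; ring)

theorem approxByBiasedMixture_of_lossTail_lt (hσ : Involutive σ) (hP : IsPMF P) (hρ : 0 < ρ)
    {δ : ℝ} (htail : lossTail P (fun v => P (σ v)) ρ < 2 * δ) :
    ApproxByBiasedMixture P (fun v => P (σ v)) ρ δ := by
  set S : α → ℝ := fun v => (P v + P (σ v)) / 2
  set D : α → ℝ := fun v => clampShift ρ (P v) (P (σ v))
  have hD : ∀ v, |D v| ≤ S v := fun v => abs_clampShift_le (add_nonneg (hP.1 v) (hP.1 (σ v)))
  have hDσ : ∀ v, D (σ v) = -D v := fun v => by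
    simp only [D, hσ v]
    exact clampShift_swap (add_nonneg (hP.1 v) (hP.1 (σ v)))
  have hDsum : ∑ v, D v = 0 := by
    have h := Equiv.sum_comp hσ.toPerm D
    simp only [Involutive.coe_toPerm, hDσ, Finset.sum_neg_distrib] at h
    linarith
  have hSsum : ∑ v, S v = 1 := by
    have hPσ : ∑ v, P (σ v) = 1 := (Equiv.sum_comp hσ.toPerm P).trans hP.2
    simp only [S, ← Finset.sum_div, Finset.sum_add_distrib, hPσ, hP.2]
    norm_num
  have herr : ∀ v, P v - ((1 + ρ) / 2 * (S v + D v) + (1 - ρ) / 2 * (S v - D v)) =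
      (P v - P (σ v)) / 2 - ρ * D v := fun v => by
    simp only [S]
    ring
  have herr' : ∀ v, P (σ v) - ((1 - ρ) / 2 * (S v + D v) + (1 + ρ) / 2 * (S v - D v)) =
      -((P v - P (σ v)) / 2 - ρ * D v) := fun v => by
    simp only [S]
    ring
  have hbound := sum_abs_sub_mul_clampShift_le_lossTail hσ hP.1 hρ
  refine ⟨fun v => S v + D v, fun v => S v - D v,
    ⟨fun v => ?_, ?_⟩, ⟨fun v => ?_, ?_⟩, ?_, ?_⟩
  · linarith [(abs_le.mp (hD v)).1]
  · rw [Finset.sum_add_distrib, hSsum, hDsum, add_zero]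
  · linarith [(abs_le.mp (hD v)).2]
  · rw [Finset.sum_sub_distrib, hSsum, hDsum, sub_zero]
  all_goals
    unfold tvDist
    simp only [herr, herr', abs_neg]
    linarith

end Mixture

section LeCam

variable {α : Type*} [Fintype α]

theorem tvDist_sq_le {P Q : α → ℝ} (hP : IsPMF P) (hQ : IsPMF Q) :
    tvDist P Q ^ 2 ≤ 1 - (∑ v, √(P v) * √(Q v)) ^ 2 := by
  set β := ∑ v, √(P v) * √(Q v)
  have hsq : ∀ v, √(P v) ^ 2 = P v ∧ √(Q v) ^ 2 = Q v := fun v =>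
    ⟨sq_sqrt (hP.1 v), sq_sqrt (hQ.1 v)⟩
  have hfactor : ∀ v, |P v - Q v| = |√(P v) - √(Q v)| * (√(P v) + √(Q v)) := fun v => by
    rw [← abs_of_nonneg (by positivity : 0 ≤ √(P v) + √(Q v)), ← abs_mul]
    congr 1
    linear_combination (hsq v).1.symm - (hsq v).2.symm
  have hminus : ∑ v, |√(P v) - √(Q v)| ^ 2 = 2 - 2 * β := by
    simp only [sq_abs, sub_sq, Finset.sum_add_distrib, Finset.sum_sub_distrib, hsq,
      hP.2, hQ.2, β, Finset.mul_sum]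
    ring_nf
  have hplus : ∑ v, (√(P v) + √(Q v)) ^ 2 = 2 + 2 * β := by
    simp only [add_sq, Finset.sum_add_distrib, hsq, hP.2, hQ.2, β, Finset.mul_sum]
    ring_nf
  have hCS := Finset.sum_mul_sq_le_sq_mul_sq Finset.univ
    (fun v => |√(P v) - √(Q v)|) (fun v => √(P v) + √(Q v))
  simp only [← hfactor, hminus, hplus] at hCS
  unfold tvDist
  nlinarith

end LeCam

theorem Fintype.sum_pi_bool_prod {ι R : Type*} [Fintype ι] [DecidableEq ι] [CommSemiring R]
    (f : ι → Bool → R) :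
    ∑ v : ι → Bool, ∏ i, f i (v i) = ∏ i, (f i true + f i false) := by
  rw [← Fintype.prod_sum]
  simp only [Fintype.sum_bool]

noncomputable def biasedCube (n : ℕ) (lam : ℝ) (v : Fin n → Bool) : ℝ :=
  ∏ i, if v i then (1 + lam) / 2 else (1 - lam) / 2

section BiasedCube

variable {n : ℕ} {lam : ℝ}

theorem biasedCube_compl (v : Fin n → Bool) :
    biasedCube n lam vᶜ = ∏ i, if v i then (1 - lam) / 2 else (1 + lam) / 2 := by
  refine Finset.prod_congr rfl fun i _ => ?_
  cases h : v i <;> simp [h]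

theorem isPMF_biasedCube (hlam : |lam| ≤ 1) : IsPMF (biasedCube n lam) := by
  obtain ⟨h0, h1⟩ := abs_le.mp hlam
  refine ⟨fun v => Finset.prod_nonneg fun i _ => ?_, ?_⟩
  · split_ifs <;> linarith
  · unfold biasedCube
    rw [Fintype.sum_pi_bool_prod (fun _ b => if b then (1 + lam) / 2 else (1 - lam) / 2)]
    have hsum : (1 + lam) / 2 + (1 - lam) / 2 = 1 := by ring
    simp [hsum]

theorem biasedCube_pos (h0 : -1 < lam) (h1 : lam < 1) (v : Fin n → Bool) :
    0 < biasedCube n lam v :=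
  Finset.prod_pos fun i _ => by split_ifs <;> linarith

theorem biasedCube_mul_biasedCube_compl (v : Fin n → Bool) :
    biasedCube n lam v * biasedCube n lam vᶜ = ((1 - lam ^ 2) / 4) ^ n := by
  rw [biasedCube_compl, biasedCube, ← Finset.prod_mul_distrib,
    Finset.prod_congr rfl (g := fun _ => (1 - lam ^ 2) / 4), Finset.prod_const,
    Finset.card_univ, Fintype.card_fin]
  intro i _
  split_ifs <;> ring

theorem sq_sum_sqrt_biasedCube_mul_sqrt_compl (hlam : |lam| ≤ 1) :
    (∑ v, √(biasedCube n lam v) * √(biasedCube n lam vᶜ)) ^ 2 = (1 - lam ^ 2) ^ n := by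
  have hc : 0 ≤ (1 - lam ^ 2) / 4 := by nlinarith [sq_abs lam, abs_nonneg lam]
  simp only [← sqrt_mul ((isPMF_biasedCube hlam).1 _), biasedCube_mul_biasedCube_compl,
    Finset.sum_const, Finset.card_univ, Fintype.card_pi, Fintype.card_bool, Finset.prod_const,
    Fintype.card_fin, nsmul_eq_mul, mul_pow, sq_sqrt (pow_nonneg hc n)]
  push_cast
  rw [← pow_mul, pow_mul', ← mul_pow]
  congr 1
  ring

theorem tvDist_biasedCube_compl_le (hlam : |lam| ≤ 1) :
    tvDist (biasedCube n lam) (fun v => biasedCube n lam vᶜ) ≤ √n * |lam| := by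
  have hP := isPMF_biasedCube (n := n) hlam
  have hQ : IsPMF (fun v => biasedCube n lam vᶜ) :=
    ⟨fun v => hP.1 _, (Equiv.sum_comp compl_involutive.toPerm _).trans hP.2⟩
  have hLeCam := tvDist_sq_le hP hQ
  rw [sq_sum_sqrt_biasedCube_mul_sqrt_compl hlam] at hLeCam
  have hBernoulli : 1 - n * lam ^ 2 ≤ (1 - lam ^ 2) ^ n := by
    have := one_add_mul_le_pow (a := -lam ^ 2) (by nlinarith [sq_abs lam, abs_nonneg lam]) n
    rw [← sub_eq_add_neg] at this
    linarith
  rw [← sqrt_sq_eq_abs, ← sqrt_mul (Nat.cast_nonneg n),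
    le_sqrt (by unfold tvDist; positivity) (by positivity)]
  linarith

end BiasedCube

theorem Real.sinh_le_mul_cosh {t : ℝ} (ht : 0 ≤ t) : sinh t ≤ t * cosh t := by
  refine hasSum_le (fun k => ?_) (hasSum_sinh t) ((hasSum_cosh t).mul_left t)
  rw [← mul_div_assoc, ← pow_succ']
  gcongr
  omega

theorem Real.two_mul_le_log_one_add_sub_log_one_sub {x : ℝ} (h0 : 0 ≤ x) (h1 : x < 1) :
    2 * x ≤ log (1 + x) - log (1 - x) := by
  have := le_hasSum (hasSum_log_sub_log_of_abs_lt_one (abs_lt.mpr ⟨by linarith, h1⟩)) 0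
    (fun j _ => by positivity)
  simpa using this

theorem Real.log_one_add_sub_log_one_sub_le {x : ℝ} (h0 : 0 ≤ x) (h1 : x < 1) :
    log (1 + x) - log (1 - x) ≤ 2 * x / (1 - x ^ 2) := by
  rw [div_eq_mul_inv]
  refine hasSum_le (fun k => ?_)
    (hasSum_log_sub_log_of_abs_lt_one (abs_lt.mpr ⟨by linarith, h1⟩))
    ((hasSum_geometric_of_lt_one (sq_nonneg x) (by nlinarith)).mul_left (2 * x))
  rw [pow_succ, pow_mul]
  have : 1 / (2 * (k : ℝ) + 1) ≤ 1 := by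
    rw [div_le_one (by positivity)]
    linarith [k.cast_nonneg (α := ℝ)]
  have : 0 ≤ (x ^ 2) ^ k * x := by positivity
  nlinarith

theorem biasedBit_mgf_le {lam t : ℝ} (hlam : 0 ≤ lam) (ht : 0 ≤ t) :
    (1 + lam) / 2 * exp t + (1 - lam) / 2 * exp (-t) ≤ exp (lam * t + t ^ 2 / 2) :=
  calc (1 + lam) / 2 * exp t + (1 - lam) / 2 * exp (-t) = cosh t + lam * sinh t := by
        rw [cosh_eq, sinh_eq]; ring
    _ ≤ cosh t * (1 + lam * t) := by nlinarith [sinh_le_mul_cosh ht, cosh_pos t]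
    _ ≤ exp (t ^ 2 / 2) * exp (lam * t) := by
        gcongr
        · exact cosh_le_exp_half_sq t
        · linarith [add_one_le_exp (lam * t)]
    _ = exp (lam * t + t ^ 2 / 2) := by rw [← exp_add, add_comm]

/-- `v i = true` is the spin `+1`. -/
def spinSum {n : ℕ} (v : Fin n → Bool) : ℝ :=
  ∑ i, if v i then 1 else -1

section Chernoff

variable {n : ℕ} {lam : ℝ}

theorem sum_biasedCube_mul_exp_spinSum (t : ℝ) :
    ∑ v, biasedCube n lam v * exp (t * spinSum v) =
      ((1 + lam) / 2 * exp t + (1 - lam) / 2 * exp (-t)) ^ n := by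
  have hfactor : ∀ v : Fin n → Bool, biasedCube n lam v * exp (t * spinSum v) =
      ∏ i, if v i then (1 + lam) / 2 * exp t else (1 - lam) / 2 * exp (-t) := fun v => by
    rw [spinSum, Finset.mul_sum, exp_sum, biasedCube, ← Finset.prod_mul_distrib]
    refine Finset.prod_congr rfl fun i _ => ?_
    split_ifs <;> simp
  simp only [hfactor]
  rw [Fintype.sum_pi_bool_prod (fun _ b =>
    if b then (1 + lam) / 2 * exp t else (1 - lam) / 2 * exp (-t))]
  simp

theorem sum_biasedCube_spinSum_gt_le (h0 : 0 ≤ lam) (h1 : lam ≤ 1) (hn : 0 < n) {s : ℝ}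
    (hs : 0 ≤ s) :
    ∑ v, (if n * lam + s < spinSum v then biasedCube n lam v else 0) ≤
      exp (-(s ^ 2 / (2 * n))) := by
  have hn' : (0 : ℝ) < n := by exact_mod_cast hn
  set t := s / n
  have ht : 0 ≤ t := by positivity
  have hX := (isPMF_biasedCube (n := n) (abs_le.mpr ⟨by linarith, h1⟩)).1
  have hmarkov : ∀ v, (if n * lam + s < spinSum v then biasedCube n lam v else 0) ≤
      exp (-(t * (n * lam + s))) * (biasedCube n lam v * exp (t * spinSum v)) := fun v => by
    rw [mul_left_comm, ← exp_add]
    split_ifs with h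
    · exact le_mul_of_one_le_right (hX v) (one_le_exp (by nlinarith))
    · exact mul_nonneg (hX v) (exp_nonneg _)
  calc ∑ v, (if n * lam + s < spinSum v then biasedCube n lam v else 0)
      ≤ exp (-(t * (n * lam + s))) * ∑ v, biasedCube n lam v * exp (t * spinSum v) := by
        rw [Finset.mul_sum]
        exact Finset.sum_le_sum fun v _ => hmarkov v
    _ ≤ exp (-(t * (n * lam + s))) * exp (lam * t + t ^ 2 / 2) ^ n := by
        rw [sum_biasedCube_mul_exp_spinSum]
        gcongr
        exact biasedBit_mgf_le h0 ht
    _ = exp (-(s ^ 2 / (2 * n))) := by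
        rw [← exp_nat_mul, ← exp_add]
        congr 1
        simp only [t]
        field_simp
        ring

theorem log_biasedCube_sub_log_biasedCube_compl (h0 : -1 < lam) (h1 : lam < 1)
    (v : Fin n → Bool) :
    log (biasedCube n lam v) - log (biasedCube n lam vᶜ) =
      spinSum v * (log (1 + lam) - log (1 - lam)) := by
  have hp : log ((1 + lam) / 2) = log (1 + lam) - log 2 := log_div (by linarith) two_ne_zero
  have hq : log ((1 - lam) / 2) = log (1 - lam) - log 2 := log_div (by linarith) two_ne_zero
  rw [biasedCube_compl, biasedCube, log_prod (fun i _ => by split_ifs <;> linarith),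
    log_prod (fun i _ => by split_ifs <;> linarith), ← Finset.sum_sub_distrib, spinSum,
    Finset.sum_mul]
  refine Finset.sum_congr rfl fun i _ => ?_
  split_ifs <;> rw [hp, hq] <;> ring

end Chernoff

section Tail

variable {n : ℕ} {lam : ℝ}

theorem lt_spinSum_of_loss_gt (hl0 : 0 < lam) (hlam : 10 * n * lam ^ 2 < 1) (hn : 0 < n)
    {w : ℝ} (hw : 0 < w) (hnw : n ≤ w ^ 2) {v : Fin n → Bool}
    (hv : 2 * w * lam * (biasedCube n lam v + biasedCube n lam vᶜ) <
      biasedCube n lam v - biasedCube n lam vᶜ) :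
    n * lam + w < spinSum v := by
  have hn' : (1 : ℝ) ≤ n := by exact_mod_cast hn
  have hl1 : lam ^ 2 < 1 / 10 := by nlinarith
  have hl1' : lam < 1 := by nlinarith
  have hX := biasedCube_pos (n := n) (by linarith) hl1' v
  have hY := biasedCube_pos (n := n) (by linarith) hl1' vᶜ
  set ρ := 2 * w * lam
  have hρ0 : 0 < ρ := by positivity
  have hρ1 : ρ < 1 := by
    by_contra! h
    nlinarith
  have hloss : log (1 + ρ) - log (1 - ρ) < spinSum v * (log (1 + lam) - log (1 - lam)) := by
    rw [← log_biasedCube_sub_log_biasedCube_compl (by linarith) hl1', ← log_div (by linarith)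
      (by linarith), ← log_div hX.ne' hY.ne']
    refine log_lt_log (by apply div_pos <;> linarith) ?_
    rw [div_lt_div_iff₀ (by linarith) hY]
    linarith
  have hρ_le := two_mul_le_log_one_add_sub_log_one_sub hρ0.le hρ1
  have hlam_le := log_one_add_sub_log_one_sub_le hl0.le hl1'
  have hlam_pos := two_mul_le_log_one_add_sub_log_one_sub hl0.le hl1'
  have hspin_pos : 0 < spinSum v := by
    by_contra! h
    nlinarith
  have hspin : 2 * ρ < spinSum v * (2 * lam / (1 - lam ^ 2)) := by nlinarith
  rw [mul_div_assoc', lt_div_iff₀ (by linarith)] at hspin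
  have hnlam : n * lam < 4 / 5 * w := by nlinarith
  nlinarith

theorem lossTail_biasedCube_le (hl0 : 0 < lam) (hlam : 10 * n * lam ^ 2 < 1) (hn : 0 < n)
    {δ : ℝ} (hδ0 : 0 < δ) (hδ : δ < 1 / 2) :
    lossTail (biasedCube n lam) (fun v => biasedCube n lam vᶜ)
      (√(8 * n * log (1 / δ)) * lam) ≤ δ := by
  have hn' : (1 : ℝ) ≤ n := by exact_mod_cast hn
  have hl1 : lam < 1 := by nlinarith
  have hlog : 1 / 2 < log (1 / δ) := by
    have h2 : log 2 ≤ log (1 / δ) := log_le_log two_pos (by rw [le_div_iff₀ hδ0]; linarith)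
    linarith [log_two_gt_d9]
  set w := √(2 * n * log (1 / δ))
  have hw2 : w ^ 2 = 2 * n * log (1 / δ) := sq_sqrt (by positivity)
  have hw : 0 < w := sqrt_pos.mpr (by positivity)
  have hρ : √(8 * n * log (1 / δ)) = 2 * w := by
    rw [show 8 * (n : ℝ) * log (1 / δ) = 2 ^ 2 * (2 * n * log (1 / δ)) by ring, sqrt_mul',
      sqrt_sq two_pos.le]
    positivity
  have hX := (isPMF_biasedCube (n := n) (abs_le.mpr ⟨by linarith, hl1.le⟩)).1
  calc lossTail (biasedCube n lam) (fun v => biasedCube n lam vᶜ)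
        (√(8 * n * log (1 / δ)) * lam)
      ≤ ∑ v, (if n * lam + w < spinSum v then biasedCube n lam v else 0) := by
        refine Finset.sum_le_sum fun v _ => ?_
        rw [hρ]
        split_ifs with hv hspin
        · exact le_rfl
        · exact absurd (lt_spinSum_of_loss_gt hl0 hlam hn hw (by nlinarith) hv) hspin
        · exact hX v
        · exact le_rfl
    _ ≤ exp (-(w ^ 2 / (2 * n))) :=
        sum_biasedCube_spinSum_gt_le hl0.le hl1.le hn hw.le
    _ = δ := by
        rw [hw2, mul_div_cancel_left₀ _ (by positivity), one_div, log_inv, neg_neg,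
          exp_log hδ0]

end Tail

/-- Decomposition lemma via advanced composition.  Let `λ ∈ (0,1)`, `n < 1/(10λ²)`.
Let `X` be the product distribution on `{±1}^n` with `Pr[X_i = 1] = (1+λ)/2` and `Y` the
one with `Pr[Y_i = 1] = (1−λ)/2`.  Then for every `δ ∈ (0,1)` and
`ρ = √(8n·log(1/δ))·λ`, there exist distributions `A, B` on `{±1}^n` with
`d_TV(X, ((1+ρ)/2)A + ((1−ρ)/2)B) < δ` and `d_TV(Y, ((1−ρ)/2)A + ((1+ρ)/2)B) < δ`. -/
theorem bsc_mixture_decomposition (n : ℕ) (lam δ : ℝ)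
    (hlam : lam ∈ Set.Ioo (0:ℝ) 1) (hn : (n : ℝ) < 1 / (10 * lam ^ 2))
    (hδ : δ ∈ Set.Ioo (0:ℝ) 1) :
    ∃ pA pB : (Fin n → Bool) → ℝ, IsPMF pA ∧ IsPMF pB ∧
      tvDist (fun v => ∏ i, if v i then (1 + lam) / 2 else (1 - lam) / 2)
        (fun v => (1 + Real.sqrt (8 * n * Real.log (1 / δ)) * lam) / 2 * pA v
                + (1 - Real.sqrt (8 * n * Real.log (1 / δ)) * lam) / 2 * pB v) < δ ∧
      tvDist (fun v => ∏ i, if v i then (1 - lam) / 2 else (1 + lam) / 2)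
        (fun v => (1 - Real.sqrt (8 * n * Real.log (1 / δ)) * lam) / 2 * pA v
                + (1 + Real.sqrt (8 * n * Real.log (1 / δ)) * lam) / 2 * pB v) < δ := by
  obtain ⟨hl0, hl1⟩ := hlam
  obtain ⟨hδ0, hδ1⟩ := hδ
  have hnl : 10 * n * lam ^ 2 < 1 := by
    rwa [lt_div_iff₀ (by positivity), ← mul_assoc, mul_comm _ 10] at hn
  have hlam : |lam| ≤ 1 := abs_le.mpr ⟨by linarith, hl1.le⟩
  simp only [← biasedCube_compl]
  change ApproxByBiasedMixture (biasedCube n lam) (fun v => biasedCube n lam vᶜ) _ δ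
  rcases lt_or_ge (√n * lam) δ with hsmall | hlarge
  · refine approxByBiasedMixture_of_tvDist_lt (isPMF_biasedCube hlam) hδ0 ?_
    exact (tvDist_biasedCube_compl_le hlam).trans_lt (by rwa [abs_of_pos hl0])
  · have hn0 : 0 < n := by
      rcases Nat.eq_zero_or_pos n with rfl | h
      · simp at hlarge; linarith
      · exact h
    have hδ2 : δ < 1 / 2 := by
      have : (√n * lam) ^ 2 < (1 / 2) ^ 2 := by
        rw [mul_pow, sq_sqrt (Nat.cast_nonneg n)]; linarith
      nlinarith [sqrt_nonneg n]
    have hρ : 0 < √(8 * n * log (1 / δ)) * lam := by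
      have : 0 < log (1 / δ) := log_pos (by rw [lt_div_iff₀ hδ0]; linarith)
      positivity
    exact approxByBiasedMixture_of_lossTail_lt compl_involutive (isPMF_biasedCube hlam) hρ
      ((lossTail_biasedCube_le hl0 hnl hn0 hδ0 hδ2).trans_lt (by linarith))
end

section
/- Suppose X and Y are (ε, δ)-indistinguishable probability distributions on a common space Ω. Then there exist distributions X', Y', E₁, E₂ on Ω such that X = (1−δ)X' + δE₁, Y = (1−δ)Y' + δE₂, and X', Y' are (ε, 0)-indistinguishable; moreover there exist distributions U, V such that X' = (e^ε/(1+e^ε))U + (1/(1+e^ε))V and Y' = (e^ε/(1+e^ε))V + (1/(1+e^ε))U. -/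
/-! Write `μ = f ρ`, `ν = g ρ` with `ρ = μ + ν`, and let `k = e^ε`. Testing the `(ε, δ)` bound on
the event `{k g < f}` shows that the sub-measures of `μ` and `ν` with densities `min f (k g)` and
`min g (k f)` have mass at least `1 - δ`, and they dominate each other up to the factor `k`.
Moving the heavier one along the segment towards `k⁻¹` times the lighter one equalises the masses
without breaking the mutual domination; normalising gives `μ'`, `ν'`, and the remainders of `μ`
and `ν` give `E₁`, `E₂`. Finally, two probability measures that dominate each other up to `k > 1`
are the stated mixtures of `U = (k μ' - ν') / (k - 1)` and `V = (k ν' - μ') / (k - 1)`; when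
`k = 1` they coincide and one takes `U = V = μ'`. -/

open MeasureTheory

/-- Distributions `μ, ν` are `(ε,δ)`-indistinguishable: for every measurable event `E`,
`μ(E) ≤ e^ε·ν(E) + δ` and `ν(E) ≤ e^ε·μ(E) + δ`. -/
def Indist {Ω : Type*} [MeasurableSpace Ω] (ε δ : ℝ) (μ ν : Measure Ω) : Prop :=
  ∀ E : Set Ω, MeasurableSet E →
    μ E ≤ ENNReal.ofReal (Real.exp ε) * ν E + ENNReal.ofReal δ ∧
    ν E ≤ ENNReal.ofReal (Real.exp ε) * μ E + ENNReal.ofReal δ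

open Set ENNReal

theorem ENNReal.exists_le_one_sub_mul_add_mul_eq {P Q b : ℝ≥0∞} (hP : P ≠ ∞) (hQb : Q ≤ b)
    (hbP : b ≤ P) : ∃ s ≤ 1, (1 - s) * P + s * Q = b := by
  rcases (hQb.trans hbP).eq_or_lt with hQP | hQP
  · exact ⟨0, zero_le_one, by simp [le_antisymm hbP (hQP ▸ hQb)]⟩
  set s := (P - b) / (P - Q)
  have hs1 : s ≤ 1 := div_le_of_le_mul (by simpa using tsub_le_tsub_left hQb P)
  have hs : s * (P - Q) = P - b := ENNReal.div_mul_cancel (tsub_pos_of_lt hQP).ne' (sub_ne_top hP)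
  refine ⟨s, hs1, (ENNReal.add_right_inj (sub_ne_top (b := b) hP)).1 ?_⟩
  calc P - b + ((1 - s) * P + s * Q) = (1 - s) * P + s * (P - Q + Q) := by rw [← hs]; ring
    _ = P := by rw [tsub_add_cancel_of_le hQP.le, ← add_mul, tsub_add_cancel_of_le hs1, one_mul]
    _ = P - b + b := (tsub_add_cancel_of_le hbP).symm

theorem ENNReal.min_le_mul_min {k : ℝ≥0∞} (hk : 1 ≤ k) (a b : ℝ≥0∞) :
    min a (k * b) ≤ k * min b (k * a) := by
  rw [mul_min, ← mul_assoc]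
  exact le_min (min_le_right _ _)
    ((min_le_left _ _).trans (le_mul_of_one_le_left' (one_le_mul hk hk)))

theorem ENNReal.ofReal_mixture_eq {K : ℝ} (hK : 1 < K) {x y : ℝ≥0∞} (hx : x ≠ ∞)
    (hyx : y ≤ ENNReal.ofReal K * x) (hxy : x ≤ ENNReal.ofReal K * y) :
    ENNReal.ofReal (K / (1 + K)) * ((ENNReal.ofReal (K - 1))⁻¹ * (ENNReal.ofReal K * x - y)) +
      ENNReal.ofReal (1 / (1 + K)) * ((ENNReal.ofReal (K - 1))⁻¹ * (ENNReal.ofReal K * y - x)) =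
      x := by
  have hy : y ≠ ∞ := ne_top_of_le_ne_top (mul_ne_top ofReal_ne_top hx) hyx
  obtain ⟨a, ha, rfl⟩ : ∃ a, 0 ≤ a ∧ ENNReal.ofReal a = x := ⟨_, toReal_nonneg, ofReal_toReal hx⟩
  obtain ⟨b, hb, rfl⟩ : ∃ b, 0 ≤ b ∧ ENNReal.ofReal b = y := ⟨_, toReal_nonneg, ofReal_toReal hy⟩
  have hK0 : 0 < K := by linarith
  have hK1 : 0 < K - 1 := by linarith
  rw [← ofReal_mul hK0.le, ofReal_le_ofReal_iff (by positivity)] at hyx hxy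
  rw [← ofReal_mul hK0.le, ← ofReal_mul hK0.le, ← ofReal_sub _ hb, ← ofReal_sub _ ha,
    ← ofReal_inv_of_pos hK1, ← ofReal_mul (inv_nonneg.2 hK1.le),
    ← ofReal_mul (inv_nonneg.2 hK1.le), ← ofReal_mul (by positivity), ← ofReal_mul (by positivity),
    ← ofReal_add (by have := sub_nonneg.2 hyx; positivity)
      (by have := sub_nonneg.2 hxy; positivity)]
  congr 1
  field_simp
  ring

section WithDensity

variable {Ω : Type*} [MeasurableSpace Ω] {ρ : Measure Ω} {f g : Ω → ℝ≥0∞}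

theorem withDensity_univ_le_withDensity_min_add (hf : Measurable f) (hg : Measurable g)
    {k d : ℝ≥0∞} (h : ∀ E, MeasurableSet E → ρ.withDensity f E ≤ k * ρ.withDensity g E + d) :
    ρ.withDensity f univ ≤ ρ.withDensity (fun x => min (f x) (k * g x)) univ + d := by
  set A := {x | k * g x < f x}
  have hA : MeasurableSet A := measurableSet_lt (hg.const_mul k) hf
  have hAf : ∫⁻ x in A, f x ∂ρ ≤ ∫⁻ x in A, min (f x) (k * g x) ∂ρ + d := by
    rw [setLIntegral_congr_fun hA fun x hx => min_eq_right (le_of_lt hx), lintegral_const_mul k hg,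
      ← withDensity_apply _ hA, ← withDensity_apply _ hA]
    exact h A hA
  have hAcf : ∫⁻ x in Aᶜ, f x ∂ρ = ∫⁻ x in Aᶜ, min (f x) (k * g x) ∂ρ :=
    setLIntegral_congr_fun hA.compl fun x (hx : ¬ k * g x < f x) => (min_eq_left (not_lt.1 hx)).symm
  simp only [withDensity_apply _ MeasurableSet.univ, setLIntegral_univ]
  calc ∫⁻ x, f x ∂ρ = ∫⁻ x in A, f x ∂ρ + ∫⁻ x in Aᶜ, f x ∂ρ := (lintegral_add_compl _ hA).symm
    _ ≤ ∫⁻ x in A, min (f x) (k * g x) ∂ρ + d + ∫⁻ x in Aᶜ, min (f x) (k * g x) ∂ρ := by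
      rw [hAcf]; gcongr
    _ = ∫⁻ x, min (f x) (k * g x) ∂ρ + d := by rw [add_right_comm, lintegral_add_compl _ hA]

theorem withDensity_min_le_smul {k : ℝ≥0∞} (hk : 1 ≤ k) (hk' : k ≠ ∞) :
    ρ.withDensity (fun x => min (f x) (k * g x)) ≤
      k • ρ.withDensity (fun x => min (g x) (k * f x)) := by
  rw [← withDensity_smul' k _ hk']
  exact withDensity_mono (Filter.Eventually.of_forall fun x => min_le_mul_min hk (f x) (g x))

end WithDensity

section Measure

variable {Ω : Type*} [MeasurableSpace Ω] {K : ℝ} {X Y : Measure Ω}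

theorem exists_isProbabilityMeasure_eq_smul_add_smul {μ μ' : Measure Ω} [IsProbabilityMeasure μ]
    [IsProbabilityMeasure μ'] {δ : ℝ} (hδ : δ ∈ Icc 0 1) (h : ENNReal.ofReal (1 - δ) • μ' ≤ μ) :
    ∃ E : Measure Ω, IsProbabilityMeasure E ∧
      μ = ENNReal.ofReal (1 - δ) • μ' + ENNReal.ofReal δ • E := by
  rcases hδ.1.eq_or_lt with rfl | hδ0
  · have : μ' = μ := Measure.eq_of_le_of_isProbabilityMeasure (by simpa using h)
    exact ⟨μ, inferInstance, by simp [this]⟩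
  have hδ' : ENNReal.ofReal δ ≠ 0 := (ofReal_pos.2 hδ0).ne'
  have := isFiniteMeasure_of_le μ h
  have hE : (μ - ENNReal.ofReal (1 - δ) • μ') univ = ENNReal.ofReal δ := by
    rw [Measure.sub_apply MeasurableSet.univ h, Measure.smul_apply, measure_univ, measure_univ,
      smul_eq_mul, mul_one, ← ofReal_one, ← ofReal_sub _ (sub_nonneg.2 hδ.2),
      sub_sub_cancel (1 : ℝ)]
  refine ⟨(ENNReal.ofReal δ)⁻¹ • (μ - ENNReal.ofReal (1 - δ) • μ'),
    ⟨by simp [hE, ENNReal.inv_mul_cancel hδ' ofReal_ne_top]⟩, ?_⟩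
  rw [smul_smul, ENNReal.mul_inv_cancel hδ' ofReal_ne_top, one_smul, add_comm,
    Measure.sub_add_cancel_of_le h]

theorem eq_smul_add_smul_of_le_smul [IsFiniteMeasure X] [IsFiniteMeasure Y] (hK : 1 < K)
    (hYX : Y ≤ ENNReal.ofReal K • X) (hXY : X ≤ ENNReal.ofReal K • Y) :
    X = ENNReal.ofReal (K / (1 + K)) • ((ENNReal.ofReal (K - 1))⁻¹ • (ENNReal.ofReal K • X - Y)) +
      ENNReal.ofReal (1 / (1 + K)) • ((ENNReal.ofReal (K - 1))⁻¹ • (ENNReal.ofReal K • Y - X)) := by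
  ext s hs
  simp only [Measure.add_apply, Measure.smul_apply, smul_eq_mul, Measure.sub_apply hs hYX,
    Measure.sub_apply hs hXY]
  exact (ofReal_mixture_eq hK (measure_ne_top X s) (hYX s) (hXY s)).symm

theorem isProbabilityMeasure_smul_sub [IsProbabilityMeasure X] [IsProbabilityMeasure Y]
    (hK : 1 < K) (hYX : Y ≤ ENNReal.ofReal K • X) :
    IsProbabilityMeasure ((ENNReal.ofReal (K - 1))⁻¹ • (ENNReal.ofReal K • X - Y)) := by
  constructor
  rw [Measure.smul_apply, Measure.sub_apply MeasurableSet.univ hYX, Measure.smul_apply,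
    measure_univ, measure_univ, smul_eq_mul, smul_eq_mul, mul_one, ← ofReal_one,
    ← ofReal_sub _ zero_le_one, ofReal_one,
    ENNReal.inv_mul_cancel (ofReal_pos.2 (sub_pos.2 hK)).ne' ofReal_ne_top]

end Measure

namespace Indist

variable {Ω : Type*} [MeasurableSpace Ω] {ε δ : ℝ} {μ ν : Measure Ω}

theorem symm (h : Indist ε δ μ ν) : Indist ε δ ν μ := fun E hE => (h E hE).symm

theorem zero_iff :
    Indist ε 0 μ ν ↔ μ ≤ ENNReal.ofReal (Real.exp ε) • ν ∧ ν ≤ ENNReal.ofReal (Real.exp ε) • μ := by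
  simp only [Indist, ofReal_zero, add_zero, Measure.le_iff, Measure.smul_apply, smul_eq_mul]
  exact ⟨fun h => ⟨fun E hE => (h E hE).1, fun E hE => (h E hE).2⟩,
    fun h E hE => ⟨h.1 E hE, h.2 E hE⟩⟩

theorem smul (h : Indist ε 0 μ ν) (c : ℝ≥0∞) : Indist ε 0 (c • μ) (c • ν) := by
  rw [zero_iff] at h ⊢
  exact ⟨(smul_le_smul_left c h.1).trans_eq (smul_comm _ _ _),
    (smul_le_smul_left c h.2).trans_eq (smul_comm _ _ _)⟩

theorem exists_indist_zero_le [SigmaFinite μ] [SigmaFinite ν] (hε : 0 ≤ ε)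
    (h : Indist ε δ μ ν) :
    ∃ M N : Measure Ω, M ≤ μ ∧ N ≤ ν ∧ Indist ε 0 M N ∧
      μ univ ≤ M univ + ENNReal.ofReal δ ∧ ν univ ≤ N univ + ENNReal.ofReal δ := by
  set k := ENNReal.ofReal (Real.exp ε)
  have hk : 1 ≤ k := one_le_ofReal.2 (Real.one_le_exp hε)
  set ρ := μ + ν
  have hμ : ρ.withDensity (μ.rnDeriv ρ) = μ :=
    Measure.withDensity_rnDeriv_eq _ _ (Measure.AbsolutelyContinuous.rfl.add_right ν)
  have hν : ρ.withDensity (ν.rnDeriv ρ) = ν :=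
    Measure.withDensity_rnDeriv_eq _ _ (Measure.AbsolutelyContinuous.rfl.add_right' μ)
  set f := μ.rnDeriv ρ
  set g := ν.rnDeriv ρ
  have hf : Measurable f := Measure.measurable_rnDeriv μ ρ
  have hg : Measurable g := Measure.measurable_rnDeriv ν ρ
  refine ⟨ρ.withDensity fun x => min (f x) (k * g x), ρ.withDensity fun x => min (g x) (k * f x),
    ?_, ?_, zero_iff.2 ⟨withDensity_min_le_smul hk ofReal_ne_top,
      withDensity_min_le_smul hk ofReal_ne_top⟩, ?_, ?_⟩
  · exact hμ ▸ withDensity_mono (Filter.Eventually.of_forall fun x => min_le_left _ _)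
  · exact hν ▸ withDensity_mono (Filter.Eventually.of_forall fun x => min_le_left _ _)
  · conv_lhs => rw [← hμ]
    exact withDensity_univ_le_withDensity_min_add hf hg fun E hE => by
      rw [hμ, hν]; exact (h E hE).1
  · conv_lhs => rw [← hν]
    exact withDensity_univ_le_withDensity_min_add hg hf fun E hE => by
      rw [hμ, hν]; exact (h E hE).2

theorem exists_le_measure_univ_eq_of_le {M N : Measure Ω} [IsFiniteMeasure M] (hε : 0 ≤ ε)
    (h : Indist ε 0 M N) (huniv : N univ ≤ M univ) :
    ∃ M₁ ≤ M, Indist ε 0 M₁ N ∧ M₁ univ = N univ := by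
  obtain ⟨hMN, hNM⟩ := zero_iff.1 h
  set k := ENNReal.ofReal (Real.exp ε)
  have hk : 1 ≤ k := one_le_ofReal.2 (Real.one_le_exp hε)
  have hk0 : k ≠ 0 := (zero_lt_one.trans_le hk).ne'
  have hkNM : k⁻¹ • N ≤ M := calc
    k⁻¹ • N ≤ k⁻¹ • k • M := smul_le_smul_left _ hNM
    _ = M := by rw [smul_smul, ENNReal.inv_mul_cancel hk0 ofReal_ne_top, one_smul]
  have hkNN : k⁻¹ • N ≤ N :=
    Measure.le_iff'.2 fun _ => mul_le_of_le_one_left' (ENNReal.inv_le_one.2 hk)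
  obtain ⟨s, hs1, hs⟩ :=
    exists_le_one_sub_mul_add_mul_eq (measure_ne_top M univ) (hkNN univ) huniv
  have hconvex : ∀ X : Measure Ω, (1 - s) • X + s • X = X := fun X => by
    rw [← add_smul, tsub_add_cancel_of_le hs1, one_smul]
  have hM₁ : (1 - s) • M + s • k⁻¹ • N ≤ M := calc
    _ ≤ (1 - s) • M + s • M := by gcongr
    _ = M := hconvex M
  refine ⟨_, hM₁, zero_iff.2 ⟨hM₁.trans hMN, ?_⟩, hs⟩
  calc N = (1 - s) • N + s • N := (hconvex N).symm
    _ ≤ (1 - s) • k • M + s • N := by gcongr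
    _ = k • ((1 - s) • M + s • k⁻¹ • N) := by
      rw [smul_add, smul_comm k (1 - s), smul_comm k s, smul_smul k k⁻¹,
        ENNReal.mul_inv_cancel hk0 ofReal_ne_top, one_smul]

theorem exists_le_le_measure_univ_eq_min {M N : Measure Ω} [IsFiniteMeasure M]
    [IsFiniteMeasure N] (hε : 0 ≤ ε) (h : Indist ε 0 M N) :
    ∃ M₁ ≤ M, ∃ N₁ ≤ N, Indist ε 0 M₁ N₁ ∧
      M₁ univ = min (M univ) (N univ) ∧ N₁ univ = min (M univ) (N univ) := by
  rcases le_total (N univ) (M univ) with hNM | hMN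
  · obtain ⟨M₁, hM₁, h₁, hu⟩ := h.exists_le_measure_univ_eq_of_le hε hNM
    exact ⟨M₁, hM₁, N, le_rfl, h₁, by rw [hu, min_eq_right hNM], (min_eq_right hNM).symm⟩
  · obtain ⟨N₁, hN₁, h₁, hu⟩ := h.symm.exists_le_measure_univ_eq_of_le hε hMN
    exact ⟨M, le_rfl, N₁, hN₁, h₁.symm, (min_eq_left hMN).symm, by rw [hu, min_eq_left hMN]⟩

theorem exists_isProbabilityMeasure_smul_le [IsProbabilityMeasure μ] [IsProbabilityMeasure ν]
    (hε : 0 ≤ ε) (hδ : δ ∈ Ico 0 1) (h : Indist ε δ μ ν) :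
    ∃ μ' ν' : Measure Ω, IsProbabilityMeasure μ' ∧ IsProbabilityMeasure ν' ∧ Indist ε 0 μ' ν' ∧
      ENNReal.ofReal (1 - δ) • μ' ≤ μ ∧ ENNReal.ofReal (1 - δ) • ν' ≤ ν := by
  obtain ⟨M, N, hM, hN, h₀, hMu, hNu⟩ := h.exists_indist_zero_le hε
  have := isFiniteMeasure_of_le μ hM
  have := isFiniteMeasure_of_le ν hN
  obtain ⟨M₁, hM₁, N₁, hN₁, h₁, hMu₁, hNu₁⟩ := h₀.exists_le_le_measure_univ_eq_min hε
  set β := min (M univ) (N univ)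
  have hr : ∀ X : Measure Ω, 1 ≤ X univ + ENNReal.ofReal δ → ENNReal.ofReal (1 - δ) ≤ X univ :=
    fun X hX => by rwa [ofReal_sub 1 hδ.1, ofReal_one, tsub_le_iff_right]
  have hrβ : ENNReal.ofReal (1 - δ) ≤ β :=
    le_min (hr M (by simpa using hMu)) (hr N (by simpa using hNu))
  have hβ0 : β ≠ 0 := ((ofReal_pos.2 (sub_pos.2 hδ.2)).trans_le hrβ).ne'
  have hβ : β ≠ ∞ := ((min_le_left _ _).trans_lt (measure_lt_top M univ)).ne
  have hprob : ∀ X : Measure Ω, X univ = β → IsProbabilityMeasure (β⁻¹ • X) := fun X hX =>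
    ⟨by simp [hX, ENNReal.inv_mul_cancel hβ0 hβ]⟩
  have hle : ∀ X : Measure Ω, ENNReal.ofReal (1 - δ) • β⁻¹ • X ≤ X := fun X => by
    rw [smul_smul, ← div_eq_mul_inv]
    exact Measure.le_iff'.2 fun _ => mul_le_of_le_one_left' (div_le_of_le_mul (by rwa [one_mul]))
  exact ⟨_, _, hprob M₁ hMu₁, hprob N₁ hNu₁, h₁.smul _, (hle M₁).trans (hM₁.trans hM),
    (hle N₁).trans (hN₁.trans hN)⟩

theorem exists_mixture [IsProbabilityMeasure μ] [IsProbabilityMeasure ν] (hε : 0 ≤ ε)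
    (h : Indist ε 0 μ ν) :
    ∃ U V : Measure Ω, IsProbabilityMeasure U ∧ IsProbabilityMeasure V ∧
      μ = ENNReal.ofReal (Real.exp ε / (1 + Real.exp ε)) • U
        + ENNReal.ofReal (1 / (1 + Real.exp ε)) • V ∧
      ν = ENNReal.ofReal (Real.exp ε / (1 + Real.exp ε)) • V
        + ENNReal.ofReal (1 / (1 + Real.exp ε)) • U := by
  obtain ⟨hμν, hνμ⟩ := zero_iff.1 h
  rcases hε.eq_or_lt with rfl | hε
  · have hνμ : ν = μ := Measure.eq_of_le_of_isProbabilityMeasure (by simpa using hνμ)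
    have hhalf : μ = ENNReal.ofReal (Real.exp 0 / (1 + Real.exp 0)) • μ
        + ENNReal.ofReal (1 / (1 + Real.exp 0)) • μ := by
      rw [← add_smul, ← ofReal_add (by positivity) (by positivity)]
      norm_num
    exact ⟨μ, μ, inferInstance, inferInstance, hhalf, hνμ ▸ hhalf⟩
  have hK : 1 < Real.exp ε := Real.one_lt_exp_iff.2 hε
  exact ⟨_, _, isProbabilityMeasure_smul_sub hK hνμ, isProbabilityMeasure_smul_sub hK hμν,
    eq_smul_add_smul_of_le_smul hK hνμ hμν, eq_smul_add_smul_of_le_smul hK hμν hνμ⟩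

end Indist

/-- Decomposition of `(ε,δ)`-indistinguishable distributions (Kairouz–Oh–Viswanath):
`X = (1−δ)X' + δE₁`, `Y = (1−δ)Y' + δE₂` with `X',Y'` `(ε,0)`-indistinguishable,
and moreover `X' = (e^ε/(1+e^ε))U + (1/(1+e^ε))V`, `Y' = (e^ε/(1+e^ε))V + (1/(1+e^ε))U`. -/
theorem indist_decomposition {Ω : Type*} [MeasurableSpace Ω] (ε δ : ℝ)
    (hε : 0 ≤ ε) (hδ : δ ∈ Set.Ico (0:ℝ) 1)
    (μ ν : Measure Ω) [IsProbabilityMeasure μ] [IsProbabilityMeasure ν]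
    (h : Indist ε δ μ ν) :
    ∃ μ' ν' E₁ E₂ : Measure Ω,
      IsProbabilityMeasure μ' ∧ IsProbabilityMeasure ν' ∧
      IsProbabilityMeasure E₁ ∧ IsProbabilityMeasure E₂ ∧
      μ = ENNReal.ofReal (1 - δ) • μ' + ENNReal.ofReal δ • E₁ ∧
      ν = ENNReal.ofReal (1 - δ) • ν' + ENNReal.ofReal δ • E₂ ∧
      Indist ε 0 μ' ν' ∧
      ∃ U V : Measure Ω, IsProbabilityMeasure U ∧ IsProbabilityMeasure V ∧
        μ' = ENNReal.ofReal (Real.exp ε / (1 + Real.exp ε)) • U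
              + ENNReal.ofReal (1 / (1 + Real.exp ε)) • V ∧
        ν' = ENNReal.ofReal (Real.exp ε / (1 + Real.exp ε)) • V
              + ENNReal.ofReal (1 / (1 + Real.exp ε)) • U := by
  obtain ⟨μ', ν', hμ', hν', h₀, hμ'μ, hν'ν⟩ := h.exists_isProbabilityMeasure_smul_le hε hδ
  obtain ⟨E₁, hE₁, hμ⟩ := exists_isProbabilityMeasure_eq_smul_add_smul (Ico_subset_Icc_self hδ) hμ'μ
  obtain ⟨E₂, hE₂, hν⟩ := exists_isProbabilityMeasure_eq_smul_add_smul (Ico_subset_Icc_self hδ) hν'ν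
  exact ⟨μ', ν', E₁, E₂, hμ', hν', hE₁, hE₂, hμ, hν, h₀, h₀.exists_mixture hε⟩
end

section
/- Let θ₁,…,θ_k and π be random variables, S a random dataset depending on them, and A(S) a post-processing of S. Let S_j denote the sub-dataset of examples from cluster j. Then I(A(S); S | θ_{1:k}) ≥ ∑_{j=1}^k I(A(S); S_j | θ_j), assuming the (S_j, θ_j) pairs are mutually independent across j conditioned on the cluster-index assignment. -/
open scoped BigOperators

/-!
Write `P` for the joint law of `(θ, S, M)`, with `M = A(S)`, and `Q_j` for the law of
`(θ_j, S_j, M)`. Independence across clusters makes `P(s | θ) = ∏_j Q_j(s_j | θ_j)` and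
`P(θ) = ∏_j Q_j(θ_j)`, so after expanding the logarithms the difference
`I(M; S | θ) - ∑_j I(M; S_j | θ_j)` collapses to the relative entropy `∑ P log (P / R)` with
`R(θ, s, m) = P(θ, m) ∏_j Q_j(s_j | θ_j, m)`. Since `R` has total mass at most `1`, Gibbs'
inequality makes it nonnegative.
-/

open Finset Real

theorem sum_mul_log_div_nonneg {I : Type*} [Fintype I] {p r : I → ℝ} (hp : ∀ i, 0 ≤ p i)
    (hp1 : ∑ i, p i = 1) (hr : ∀ i, 0 ≤ r i) (hr1 : ∑ i, r i ≤ 1)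
    (hpr : ∀ i, 0 < p i → 0 < r i) :
    0 ≤ ∑ i, p i * log (p i / r i) := by
  have key : ∀ i, p i - r i ≤ p i * log (p i / r i) := by
    intro i
    rcases (hp i).eq_or_lt with h | h
    · simp [← h, hr i]
    · have := mul_le_mul_of_nonneg_left
        (one_sub_inv_le_log_of_pos (div_pos h (hpr i h))) h.le
      rwa [inv_div, mul_one_sub, mul_div_cancel₀ _ h.ne'] at this
  calc (0 : ℝ) ≤ ∑ i, (p i - r i) := by rw [sum_sub_distrib]; linarith
    _ ≤ _ := sum_le_sum fun i _ => key i

theorem Fintype.sum_ite_eq_mul_prod_erase {ι R : Type*} [Fintype ι] [DecidableEq ι]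
    [CommSemiring R] {E : ι → Type*} [∀ j, Fintype (E j)] [∀ j, DecidableEq (E j)]
    (f : ∀ j, E j → R) (j₀ : ι) (e : E j₀) :
    ∑ z : ∀ j, E j, (if z j₀ = e then ∏ j, f j (z j) else 0)
      = f j₀ e * ∏ j ∈ univ.erase j₀, ∑ x, f j x := by
  set t : ∀ j, Finset (E j) := Function.update (fun _ => univ) j₀ {e}
  have hfilter : univ.filter (fun z : ∀ j, E j => z j₀ = e) = Fintype.piFinset t := by
    ext z
    simp only [mem_filter, mem_univ, true_and, Fintype.mem_piFinset]
    refine ⟨fun hz j => ?_, fun hz => by simpa [t] using hz j₀⟩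
    rcases eq_or_ne j j₀ with rfl | hj
    · simp [t, hz]
    · simp [t, hj]
  rw [← sum_filter, hfilter, ← prod_univ_sum, ← mul_prod_erase _ _ (mem_univ j₀)]
  congr 1
  · simp [t]
  · exact Finset.prod_congr rfl fun j hj => by simp [t, ne_of_mem_erase hj]

theorem sum_prod_div_sum_le_one {ι : Type*} [Fintype ι] [DecidableEq ι] {E : ι → Type*}
    [∀ j, Fintype (E j)] {q : ∀ j, E j → ℝ} (hq : ∀ j x, 0 ≤ q j x) :
    ∑ z : ∀ j, E j, ∏ j, q j (z j) / ∑ x, q j x ≤ 1 := by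
  rw [← Fintype.prod_sum fun j x => q j x / ∑ y, q j y]
  refine prod_le_one (fun j _ => sum_nonneg fun x _ => ?_) fun j _ => ?_
  · exact div_nonneg (hq j x) (sum_nonneg fun y _ => hq j y)
  · rw [← sum_div]
    exact div_self_le_one _

section PushTS

variable {T S M T' S' : Type*} [Fintype T] [Fintype S] [DecidableEq T']
  [DecidableEq S'] {J : T × S × M → ℝ}

/-- The law of `(f T, g S, M)` when `(T, S, M)` has law `J`. -/
def pushTS (f : T → T') (g : S → S') (J : T × S × M → ℝ) (y : T' × S' × M) : ℝ :=
  ∑ t, ∑ s, if f t = y.1 ∧ g s = y.2.1 then J (t, s, y.2.2) else 0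

theorem pushTS_nonneg (f : T → T') (g : S → S') (hJ : ∀ x, 0 ≤ J x) (y : T' × S' × M) :
    0 ≤ pushTS f g J y :=
  sum_nonneg fun _ _ => sum_nonneg fun _ _ => by split_ifs <;> simp [hJ]

theorem le_pushTS (f : T → T') (g : S → S') (hJ : ∀ x, 0 ≤ J x) (t : T) (s : S) (m : M) :
    J (t, s, m) ≤ pushTS f g J (f t, g s, m) := by
  have hterm : ∀ t' s', 0 ≤ if f t' = f t ∧ g s' = g s then J (t', s', m) else 0 :=
    fun _ _ => by split_ifs <;> simp [hJ]
  calc J (t, s, m) = if f t = f t ∧ g s = g s then J (t, s, m) else 0 := by simp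
    _ ≤ ∑ s', if f t = f t ∧ g s' = g s then J (t, s', m) else 0 :=
      single_le_sum (fun s' _ => hterm t s') (mem_univ s)
    _ ≤ pushTS f g J (f t, g s, m) :=
      single_le_sum (f := fun t' => ∑ s', _) (fun t' _ => sum_nonneg fun s' _ => hterm t' s')
        (mem_univ t)

theorem sum_pushTS_mul [Fintype M] [Fintype T'] [Fintype S'] (f : T → T') (g : S → S')
    (F : T' × S' × M → ℝ) :
    ∑ t', ∑ s', ∑ m, pushTS f g J (t', s', m) * F (t', s', m)
      = ∑ t, ∑ s, ∑ m, J (t, s, m) * F (f t, g s, m) := by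
  simp only [pushTS, sum_mul, ite_mul, zero_mul, ite_and]
  simp only [sum_comm (s := (univ : Finset M)) (t := (univ : Finset T)),
    sum_comm (s := (univ : Finset S')) (t := (univ : Finset T)),
    sum_comm (s := (univ : Finset T')) (t := (univ : Finset T)),
    sum_comm (s := (univ : Finset M)) (t := (univ : Finset S)),
    sum_comm (s := (univ : Finset S')) (t := (univ : Finset S)),
    sum_comm (s := (univ : Finset T')) (t := (univ : Finset S))]
  simp only [sum_ite_irrel, sum_const_zero, sum_ite_eq, mem_univ, if_true]

theorem sum_pushTS_right [Fintype M] (f : T → T') (g : S → S') (t' : T') (s' : S') :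
    ∑ m, pushTS f g J (t', s', m)
      = ∑ t, ∑ s, if f t = t' ∧ g s = s' then ∑ m, J (t, s, m) else 0 := by
  simp only [pushTS]
  rw [sum_comm]
  refine sum_congr rfl fun t _ => ?_
  rw [sum_comm]
  exact sum_congr rfl fun s _ => by split_ifs <;> simp

end PushTS

section LogRatio

variable {T S M : Type*} [Fintype S] [Fintype M] {J : T × S × M → ℝ}

noncomputable def condMILogRatio (J : T × S × M → ℝ) (t : T) (s : S) (m : M) : ℝ :=
  log ((J (t, s, m) * ∑ s', ∑ m', J (t, s', m')) / ((∑ m', J (t, s, m')) * ∑ s', J (t, s', m)))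

theorem condMI_eq_sum_mul_condMILogRatio [Fintype T] (J : T × S × M → ℝ) :
    condMI J = ∑ t, ∑ s, ∑ m, J (t, s, m) * condMILogRatio J t s m := rfl

theorem marginals_pos_of_pos (hJ : ∀ x, 0 ≤ J x) {t : T} {s : S} {m : M} (h : 0 < J (t, s, m)) :
    0 < ∑ m', J (t, s, m') ∧ 0 < ∑ s', J (t, s', m) ∧ 0 < ∑ s', ∑ m', J (t, s', m') := by
  have hTS : 0 < ∑ m', J (t, s, m') :=
    h.trans_le (single_le_sum (f := fun m' => J (t, s, m')) (fun _ _ => hJ _) (mem_univ m))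
  refine ⟨hTS, h.trans_le (single_le_sum (f := fun s' => J (t, s', m)) (fun _ _ => hJ _)
    (mem_univ s)), hTS.trans_le (single_le_sum (f := fun s' => ∑ m', J (t, s', m'))
    (fun _ _ => sum_nonneg fun _ _ => hJ _) (mem_univ s))⟩

theorem condMILogRatio_eq_of_pos (hJ : ∀ x, 0 ≤ J x) {t : T} {s : S} {m : M}
    (h : 0 < J (t, s, m)) :
    condMILogRatio J t s m = log (J (t, s, m)) + log (∑ s', ∑ m', J (t, s', m'))
      - log (∑ m', J (t, s, m')) - log (∑ s', J (t, s', m)) := by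
  obtain ⟨hTS, hTM, hT⟩ := marginals_pos_of_pos hJ h
  rw [condMILogRatio, log_div (by positivity) (by positivity), log_mul h.ne' hT.ne',
    log_mul hTS.ne' hTM.ne']
  ring

end LogRatio

section Clusters

variable {ι Θ Mc : Type*} {D : ι → Type*} [Fintype ι] [Fintype Θ] [∀ j, Fintype (D j)]
  [Fintype Mc] {p : (j : ι) → Θ × D j → ℝ} {κ : ((j : ι) → D j) → Mc → ℝ}

/-- The law of `(θ, S, A(S))`; `clusterMarginal p κ j` below is the law of `(θ_j, S_j, A(S))`. -/
def clusterJoint (p : (j : ι) → Θ × D j → ℝ) (κ : ((j : ι) → D j) → Mc → ℝ)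
    (x : (ι → Θ) × ((j : ι) → D j) × Mc) : ℝ :=
  (∏ j, p j (x.1 j, x.2.1 j)) * κ x.2.1 x.2.2

theorem clusterJoint_nonneg (hp : ∀ j, IsPMF (p j)) (hκ : ∀ s, IsPMF (κ s))
    (x : (ι → Θ) × ((j : ι) → D j) × Mc) : 0 ≤ clusterJoint p κ x :=
  mul_nonneg (prod_nonneg fun j _ => (hp j).1 _) ((hκ _).1 _)

omit [Fintype Θ] [∀ j, Fintype (D j)] in
theorem sum_clusterJoint_right (hκ : ∀ s, IsPMF (κ s)) (θ : ι → Θ) (s : (j : ι) → D j) :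
    ∑ m, clusterJoint p κ (θ, s, m) = ∏ j, p j (θ j, s j) := by
  simp only [clusterJoint, ← mul_sum, (hκ s).2, mul_one]

variable [DecidableEq ι]

theorem sum_clusterJoint (hp : ∀ j, IsPMF (p j)) (hκ : ∀ s, IsPMF (κ s)) :
    ∑ x, clusterJoint p κ x = 1 := by
  simp only [Fintype.sum_prod_type, sum_clusterJoint_right hκ]
  rw [sum_congr rfl fun θ _ => (Fintype.prod_sum fun j d => p j (θ j, d)).symm,
    ← Fintype.prod_sum fun j t => ∑ d, p j (t, d)]
  exact prod_eq_one fun j _ => by rw [← Fintype.sum_prod_type']; exact (hp j).2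

variable [DecidableEq Θ] [∀ j, DecidableEq (D j)]

def clusterMarginal (p : (j : ι) → Θ × D j → ℝ) (κ : ((j : ι) → D j) → Mc → ℝ) (j : ι) :
    Θ × D j × Mc → ℝ :=
  pushTS (· j) (· j) (clusterJoint p κ)

theorem clusterMarginal_nonneg (hp : ∀ j, IsPMF (p j)) (hκ : ∀ s, IsPMF (κ s)) (j : ι)
    (y : Θ × D j × Mc) : 0 ≤ clusterMarginal p κ j y :=
  pushTS_nonneg _ _ (clusterJoint_nonneg hp hκ) y

/-- This is where independence across clusters enters. -/
theorem sum_clusterMarginal_right (hp : ∀ j, IsPMF (p j)) (hκ : ∀ s, IsPMF (κ s)) (j : ι)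
    (t : Θ) (d : D j) : ∑ m, clusterMarginal p κ j (t, d, m) = p j (t, d) := by
  rw [clusterMarginal, sum_pushTS_right]
  simp only [sum_clusterJoint_right hκ]
  rw [← Fintype.sum_prod_type', ← Fintype.sum_equiv (Equiv.arrowProdEquivProdArrow ι _ D)
    (fun z => if z j = (t, d) then ∏ i, p i (z i) else 0) _ fun z => by simp [Prod.ext_iff],
    Fintype.sum_ite_eq_mul_prod_erase, prod_eq_one fun i _ => (hp i).2, mul_one]

theorem clusterMarginal_pos_of_pos (hp : ∀ j, IsPMF (p j)) (hκ : ∀ s, IsPMF (κ s))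
    {θ : ι → Θ} {s : (j : ι) → D j} {m : Mc} (h : 0 < clusterJoint p κ (θ, s, m)) (j : ι) :
    0 < clusterMarginal p κ j (θ j, s j, m) :=
  h.trans_le (le_pushTS _ _ (clusterJoint_nonneg hp hκ) θ s m)

theorem sum_clusterJoint_right_eq_prod (hp : ∀ j, IsPMF (p j)) (hκ : ∀ s, IsPMF (κ s))
    (θ : ι → Θ) (s : (j : ι) → D j) :
    ∑ m, clusterJoint p κ (θ, s, m) = ∏ j, ∑ m, clusterMarginal p κ j (θ j, s j, m) := by
  simp only [sum_clusterJoint_right hκ, sum_clusterMarginal_right hp hκ]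

theorem sum_sum_clusterJoint_eq_prod (hp : ∀ j, IsPMF (p j)) (hκ : ∀ s, IsPMF (κ s))
    (θ : ι → Θ) :
    ∑ s, ∑ m, clusterJoint p κ (θ, s, m) = ∏ j, ∑ d, ∑ m, clusterMarginal p κ j (θ j, d, m) := by
  simp only [sum_clusterJoint_right hκ, sum_clusterMarginal_right hp hκ]
  exact (Fintype.prod_sum fun j d => p j (θ j, d)).symm

/-- The law `P(θ, m) ∏_j Q_j(s_j | θ_j, m)`, relative to which the gap between the two sides of
the theorem is a relative entropy. -/
noncomputable def clusterComparison (p : (j : ι) → Θ × D j → ℝ) (κ : ((j : ι) → D j) → Mc → ℝ)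
    (x : (ι → Θ) × ((j : ι) → D j) × Mc) : ℝ :=
  (∑ s, clusterJoint p κ (x.1, s, x.2.2)) *
    ∏ j, clusterMarginal p κ j (x.1 j, x.2.1 j, x.2.2) /
      ∑ d, clusterMarginal p κ j (x.1 j, d, x.2.2)

theorem clusterComparison_nonneg (hp : ∀ j, IsPMF (p j)) (hκ : ∀ s, IsPMF (κ s))
    (x : (ι → Θ) × ((j : ι) → D j) × Mc) : 0 ≤ clusterComparison p κ x :=
  mul_nonneg (sum_nonneg fun _ _ => clusterJoint_nonneg hp hκ _) <| prod_nonneg fun j _ =>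
    div_nonneg (clusterMarginal_nonneg hp hκ j _)
      (sum_nonneg fun _ _ => clusterMarginal_nonneg hp hκ j _)

theorem clusterComparison_pos_of_pos (hp : ∀ j, IsPMF (p j)) (hκ : ∀ s, IsPMF (κ s))
    {θ : ι → Θ} {s : (j : ι) → D j} {m : Mc} (h : 0 < clusterJoint p κ (θ, s, m)) :
    0 < clusterComparison p κ (θ, s, m) :=
  mul_pos (marginals_pos_of_pos (clusterJoint_nonneg hp hκ) h).2.1 <| prod_pos fun j _ =>
    have hQ := clusterMarginal_pos_of_pos hp hκ h j
    div_pos hQ (marginals_pos_of_pos (clusterMarginal_nonneg hp hκ j) hQ).2.1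

theorem sum_clusterComparison_le_one (hp : ∀ j, IsPMF (p j)) (hκ : ∀ s, IsPMF (κ s)) :
    ∑ x, clusterComparison p κ x ≤ 1 := by
  have hslice : ∀ θ m, ∑ s, clusterComparison p κ (θ, s, m) ≤ ∑ s, clusterJoint p κ (θ, s, m) :=
    fun θ m => by
      simp only [clusterComparison, ← mul_sum]
      exact mul_le_of_le_one_right (sum_nonneg fun _ _ => clusterJoint_nonneg hp hκ _)
        (sum_prod_div_sum_le_one (q := fun j d => clusterMarginal p κ j (θ j, d, m))
          fun j _ => clusterMarginal_nonneg hp hκ j _)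
  calc ∑ x, clusterComparison p κ x
      = ∑ θ : ι → Θ, ∑ m, ∑ s : (j : ι) → D j, clusterComparison p κ (θ, s, m) := by
        simp only [Fintype.sum_prod_type]
        exact sum_congr rfl fun θ _ => sum_comm
    _ ≤ ∑ θ : ι → Θ, ∑ m, ∑ s : (j : ι) → D j, clusterJoint p κ (θ, s, m) :=
        sum_le_sum fun θ _ => sum_le_sum fun m _ => hslice θ m
    _ = 1 := by
        rw [← sum_clusterJoint hp hκ]
        simp only [Fintype.sum_prod_type]
        exact sum_congr rfl fun θ _ => sum_comm

theorem condMILogRatio_sub_sum_eq_log_div (hp : ∀ j, IsPMF (p j)) (hκ : ∀ s, IsPMF (κ s))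
    {θ : ι → Θ} {s : (j : ι) → D j} {m : Mc} (h : 0 < clusterJoint p κ (θ, s, m)) :
    condMILogRatio (clusterJoint p κ) θ s m
        - ∑ j, condMILogRatio (clusterMarginal p κ j) (θ j) (s j) m
      = log (clusterJoint p κ (θ, s, m) / clusterComparison p κ (θ, s, m)) := by
  have hP := clusterJoint_nonneg hp hκ
  have hQ := clusterMarginal_pos_of_pos hp hκ h
  have hQm := fun j => marginals_pos_of_pos (clusterMarginal_nonneg hp hκ j) (hQ j)
  obtain ⟨-, hPtm, -⟩ := marginals_pos_of_pos hP h
  rw [log_div h.ne' (clusterComparison_pos_of_pos hp hκ h).ne', clusterComparison,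
    condMILogRatio_eq_of_pos hP h, sum_congr rfl fun j _ =>
      condMILogRatio_eq_of_pos (clusterMarginal_nonneg hp hκ j) (hQ j),
    sum_sum_clusterJoint_eq_prod hp hκ, sum_clusterJoint_right_eq_prod hp hκ,
    log_prod fun j _ => (hQm j).2.2.ne', log_prod fun j _ => (hQm j).1.ne',
    log_mul hPtm.ne' (prod_pos fun j _ => div_pos (hQ j) (hQm j).2.1).ne',
    log_prod fun j _ => (div_pos (hQ j) (hQm j).2.1).ne']
  simp only [log_div (hQ _).ne' (hQm _).2.1.ne', sum_sub_distrib, sum_add_distrib]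
  ring

theorem condMI_clusterJoint_sub_sum_condMI (hp : ∀ j, IsPMF (p j)) (hκ : ∀ s, IsPMF (κ s)) :
    condMI (clusterJoint p κ) - ∑ j, condMI (clusterMarginal p κ j)
      = ∑ x, clusterJoint p κ x * log (clusterJoint p κ x / clusterComparison p κ x) := by
  have htransport : ∀ j, condMI (clusterMarginal p κ j) = ∑ θ : ι → Θ, ∑ s : (j : ι) → D j,
      ∑ m, clusterJoint p κ (θ, s, m) * condMILogRatio (clusterMarginal p κ j) (θ j) (s j) m :=
    fun j => sum_pushTS_mul _ _ fun y => condMILogRatio (clusterMarginal p κ j) y.1 y.2.1 y.2.2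
  rw [condMI_eq_sum_mul_condMILogRatio, sum_congr rfl fun j _ => htransport j]
  simp only [sum_comm (s := (univ : Finset ι)) (t := (univ : Finset (ι → Θ))),
    sum_comm (s := (univ : Finset ι)) (t := (univ : Finset ((j : ι) → D j))),
    sum_comm (s := (univ : Finset ι)) (t := (univ : Finset Mc)),
    ← sum_sub_distrib, ← mul_sum, ← mul_sub, Fintype.sum_prod_type]
  refine sum_congr rfl fun θ _ => sum_congr rfl fun s _ => sum_congr rfl fun m _ => ?_
  rcases (clusterJoint_nonneg hp hκ (θ, s, m)).eq_or_lt with h | h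
  · simp [← h]
  · rw [condMILogRatio_sub_sum_eq_log_div hp hκ h]

end Clusters

/-- Superadditivity of memorization across clusters.  With cluster parameters
`θ₁,…,θ_k` i.i.d. and, conditioned on the (fixed) cluster-index assignment, the
sub-datasets `S_j` mutually independent across `j` with `(S_j, θ_j)` distributed
according to per-cluster joints `pj j`, and `A(S)` a post-processing of the full dataset
`S = (S_1,…,S_k)`:  `I(A(S); S | θ_{1:k}) ≥ ∑_j I(A(S); S_j | θ_j)`. -/
theorem cmi_superadditive {Θ : Type*} [Fintype Θ] [DecidableEq Θ] {Mc : Type*} [Fintype Mc]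
    (k : ℕ) (D : Fin k → Type*) [∀ j, Fintype (D j)] [∀ j, DecidableEq (D j)]
    (pj : (j : Fin k) → Θ × D j → ℝ) (hpj : ∀ j, IsPMF (pj j))
    (κ : ((j : Fin k) → D j) → Mc → ℝ) (hκ : ∀ s, IsPMF (κ s)) :
    condMI (fun tsm : (Fin k → Θ) × ((j : Fin k) → D j) × Mc =>
        (∏ j, pj j (tsm.1 j, tsm.2.1 j)) * κ tsm.2.1 tsm.2.2)
      ≥ ∑ j0 : Fin k,
          condMI (fun tdm : Θ × D j0 × Mc =>
            ∑ θv : Fin k → Θ, ∑ s : (j : Fin k) → D j,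
              (if θv j0 = tdm.1 ∧ s j0 = tdm.2.1 then
                (∏ j, pj j (θv j, s j)) * κ s tdm.2.2 else 0)) := by
  change condMI (clusterJoint pj κ) ≥ ∑ j, condMI (clusterMarginal pj κ j)
  rw [ge_iff_le, ← sub_nonneg, condMI_clusterJoint_sub_sum_condMI hpj hκ]
  exact sum_mul_log_div_nonneg (clusterJoint_nonneg hpj hκ) (sum_clusterJoint hpj hκ)
    (clusterComparison_nonneg hpj hκ) (sum_clusterComparison_le_one hpj hκ)
    fun _ => clusterComparison_pos_of_pos hpj hκ
end
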